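/- arXiv:2210.01856 — 7 statements merged into one kernel-verified Lean document; each statement's English description precedes it below -/
import Mathlib

section
/- Let (Γ,α) be an abstract GKM graph with axial function α : E(Γ) → ℤ^k/±1, with a chosen lift α : E(Γ) → ℤ^k. The equivariant graph cohomology H*_T(Γ,α) over R = ℤ[x_1,…,x_k] is the set of tuples (f(u))_{u ∈ V(Γ)} of polynomials such that f(v) − f(w) is divisible by α(e) (viewed as a linear polynomial) for every edge e from v to w. Then the rank of H*_T(Γ,α) as an R-module equals the number of vertices of Γ; more precisely, the cokernel of the inclusion H*_T(Γ,α) → ⊕_{v ∈ V(Γ)} R is a torsion R-module. -/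
open MvPolynomial

/-- The weight vector `a ∈ ℤᵏ` viewed as a linear polynomial in `ℤ[x₁,…,x_k]`. -/
noncomputable def linForm {k : ℕ} (a : Fin k → ℤ) : MvPolynomial (Fin k) ℤ :=
  ∑ i, C (a i) * X i

/-- The equivariant graph cohomology `H*_T(Γ,α)` of a labelled graph, as a submodule of
`⊕_{v ∈ V(Γ)} R`: tuples `(f(u))_u` such that `α(e)` divides `f(v) - f(w)` for every
edge `e` joining `v` and `w`. -/
noncomputable def gkmCohom {V E : Type} {k : ℕ} (inc : E → V → Prop)
    (α : E → Fin k → ℤ) :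
    Submodule (MvPolynomial (Fin k) ℤ) (V → MvPolynomial (Fin k) ℤ) where
  carrier := {f | ∀ (e : E) (v w : V), inc e v → inc e w → v ≠ w →
    linForm (α e) ∣ f v - f w}
  add_mem' := by
    intro f g hf hg e v w hv hw hvw
    have h := dvd_add (hf e v w hv hw hvw) (hg e v w hv hw hvw)
    simpa [add_sub_add_comm] using h
  zero_mem' := by intro e v w _ _ _; simp
  smul_mem' := by
    intro r f hf e v w hv hw hvw
    have h := (hf e v w hv hw hvw).mul_left r
    simpa [Pi.smul_apply, smul_eq_mul, mul_sub] using h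

/-- For an abstract GKM graph `(Γ,α)` (with chosen lift of the axial
function), the rank of `H*_T(Γ,α)` as an `R = ℤ[x₁,…,x_k]`-module equals the number of
vertices of `Γ`; more precisely, the cokernel of the inclusion
`H*_T(Γ,α) → ⊕_{v ∈ V(Γ)} R` is a torsion `R`-module. -/
theorem stmt1 {V E : Type} [Fintype V] [Fintype E] {k : ℕ}
    (inc : E → V → Prop) (α : E → Fin k → ℤ)
    (hnz : ∀ e, α e ≠ 0)
    (hindep : ∀ (v : V) (e f : E), inc e v → inc f v → e ≠ f →
      ∀ a b : ℤ, a • α e + b • α f = 0 → a = 0 ∧ b = 0) :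
    Module.rank (MvPolynomial (Fin k) ℤ) (gkmCohom inc α) = Fintype.card V ∧
    ∀ f : V → MvPolynomial (Fin k) ℤ, ∃ r : MvPolynomial (Fin k) ℤ,
      r ≠ 0 ∧ r • f ∈ gkmCohom inc α := by
  classical
  have hcoeff : ∀ (a : Fin k → ℤ) (i : Fin k),
      MvPolynomial.coeff (Finsupp.single i 1) (linForm a) = a i := by
    intro a i
    rw [linForm, MvPolynomial.coeff_sum, Finset.sum_eq_single i]
    · rw [MvPolynomial.coeff_C_mul, MvPolynomial.coeff_X]; simp
    · intro b _ hb
      rw [MvPolynomial.coeff_C_mul, MvPolynomial.coeff_X', if_neg, mul_zero]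
      simp [Finsupp.single_eq_single_iff, hb]
    · simp
  have hlin : ∀ e : E, linForm (α e) ≠ 0 := by
    intro e h
    apply hnz e
    funext i
    have h2 := congrArg (fun p => MvPolynomial.coeff (Finsupp.single i 1) p) h
    simpa [hcoeff] using h2
  set r : MvPolynomial (Fin k) ℤ := ∏ e : E, linForm (α e) with hrdef
  have hrne : r ≠ 0 := Finset.prod_ne_zero_iff.mpr (fun e _ => hlin e)
  have hmem : ∀ f : V → MvPolynomial (Fin k) ℤ, r • f ∈ gkmCohom inc α := by
    intro f e v w hv hw hvw
    have hd : linForm (α e) ∣ r := Finset.dvd_prod_of_mem _ (Finset.mem_univ e)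
    have : linForm (α e) ∣ r * (f v - f w) := hd.mul_right _
    simpa [Pi.smul_apply, smul_eq_mul, mul_sub] using this
  refine ⟨?_, fun f => ⟨r, hrne, hmem f⟩⟩
  have h1 : Module.rank (MvPolynomial (Fin k) ℤ) (gkmCohom inc α) ≤
      Module.rank (MvPolynomial (Fin k) ℤ) (V → MvPolynomial (Fin k) ℤ) :=
    Submodule.rank_le _
  have h2 : Module.rank (MvPolynomial (Fin k) ℤ) (V → MvPolynomial (Fin k) ℤ) ≤
      Module.rank (MvPolynomial (Fin k) ℤ) (gkmCohom inc α) := by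
    refine LinearMap.rank_le_of_injective
      (LinearMap.codRestrict (gkmCohom inc α)
        (LinearMap.lsmul (MvPolynomial (Fin k) ℤ) (V → MvPolynomial (Fin k) ℤ) r)
        (fun f => hmem f)) ?_
    intro f g hfg
    have : r • f = r • g := congrArg Subtype.val hfg
    exact smul_right_injective _ hrne this
  have hrk : Module.rank (MvPolynomial (Fin k) ℤ) (V → MvPolynomial (Fin k) ℤ) =
      Fintype.card V := rank_fun'
  rw [← hrk]
  exact le_antisymm h1 h2
end

section
/- Let (Γ,α) be an abstract n-valent GKM graph with chosen signs of weights and connection ∇. Let e be an edge from v to w, let e = e_1, e_2, …, e_n be the edges at v, and write α(∇_{e,v,w}(e_i)) = ε_i α(e_i) + k_i α(e) with ε_i ∈ {±1}, k_i ∈ ℤ (and ε_1 = 1, k_1 = 0). Define the Thom class Th_e of the oriented edge e as the tuple f with f(v) = ∏_{f ∈ E(Γ)_v \ {e}} α(f), f(w) = (∏_i ε_i) · ∏_{f ∈ E(Γ)_w \ {e}} α(f), and f(u) = 0 otherwise. Then Th_e satisfies all divisibility conditions, i.e., Th_e is an element of the equivariant graph cohomology H^{2n−2}_T(Γ,α).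 -/
open MvPolynomial Finset

private lemma dvd_prod_sub_prod {R ι : Type*} [CommRing R] (s : Finset ι) (f h : ι → R)
    (d : R) (H : ∀ i ∈ s, d ∣ f i - h i) :
    d ∣ (∏ i ∈ s, f i) - ∏ i ∈ s, h i := by
  classical
  induction s using Finset.cons_induction with
  | empty => simp
  | cons a s ha ih =>
    rw [Finset.prod_cons, Finset.prod_cons]
    have key : f a * ∏ i ∈ s, f i - h a * ∏ i ∈ s, h i
        = f a * ((∏ i ∈ s, f i) - ∏ i ∈ s, h i) + (f a - h a) * ∏ i ∈ s, h i := by ring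
    rw [key]
    exact dvd_add (Dvd.dvd.mul_left (ih fun i hi => H i (Finset.mem_cons_of_mem hi)) _)
      (Dvd.dvd.mul_right (H a (Finset.mem_cons_self _ _)) _)

/-- Let `e₀` be an edge from `v₀` to `w₀` in an abstract `n`-valent GKM
graph with chosen signs of the weights (weights given as linear forms `α : E(Γ) → R`),
and let `∇ = nab : E(Γ)_{v₀} ≃ E(Γ)_{w₀}` be the connection along `e₀`, with
`α(∇(g)) = ε_g α(g) + k_g α(e₀)`, `ε_g ∈ {±1}`, `ε_{e₀} = 1`, `k_{e₀} = 0`.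
The Thom class `Th_{e₀}` of the oriented edge `e₀` is the tuple with value
`∏_{f ∈ E(Γ)_{v₀}\{e₀}} α(f)` at `v₀`, value `(∏_g ε_g)·∏_{f ∈ E(Γ)_{w₀}\{e₀}} α(f)`
at `w₀` and `0` elsewhere.  Then `Th_{e₀}` satisfies all divisibility conditions, i.e. it
is an element of the equivariant graph cohomology `H^{2n-2}_T(Γ,α)`. -/
theorem stmt2 {V E : Type} [Fintype E] [DecidableEq E] [DecidableEq V] {k : ℕ}
    (inc : E → V → Prop) [∀ e v, Decidable (inc e v)]
    (α : E → MvPolynomial (Fin k) ℤ)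
    (hinc2 : ∀ (g : E) (a b c : V), inc g a → inc g b → inc g c → a = b ∨ a = c ∨ b = c)
    (e0 : E) (v0 w0 : V) (hv : inc e0 v0) (hw : inc e0 w0) (hvw : v0 ≠ w0)
    (nab : {f // inc f v0} ≃ {f // inc f w0})
    (hfix : nab ⟨e0, hv⟩ = ⟨e0, hw⟩)
    (ε kk : {f // inc f v0} → ℤ)
    (hε : ∀ g, ε g = 1 ∨ ε g = -1)
    (hε0 : ε ⟨e0, hv⟩ = 1) (hk0 : kk ⟨e0, hv⟩ = 0)
    (hrel : ∀ g : {f // inc f v0},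
      α (↑(nab g) : E) = ε g • α (↑g : E) + kk g • α e0)
    (Th : V → MvPolynomial (Fin k) ℤ)
    (hTh : Th = fun u =>
      if u = v0 then ∏ g ∈ (Finset.univ.filter fun g => inc g v0).erase e0, α g
      else if u = w0 then
        (∏ g : {f // inc f v0}, ε g) •
          ∏ g ∈ (Finset.univ.filter fun g => inc g w0).erase e0, α g
      else 0) :
    ∀ (g : E) (a b : V), inc g a → inc g b → a ≠ b → α g ∣ Th a - Th b := by
  classical
  set Pv : MvPolynomial (Fin k) ℤ :=
    ∏ g ∈ (Finset.univ.filter fun g => inc g v0).erase e0, α g with hPv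
  set Pw : MvPolynomial (Fin k) ℤ :=
    ∏ g ∈ (Finset.univ.filter fun g => inc g w0).erase e0, α g with hPwdef
  have hsmul : ∀ (c : ℤ) (p q : MvPolynomial (Fin k) ℤ), p ∣ q → p ∣ c • q := by
    intro c p q h
    rw [smul_eq_C_mul]
    exact h.mul_left _
  -- values of Th
  have Tv : Th v0 = Pv := by rw [hTh]; simp
  have Tw : Th w0 = (∏ g : {f // inc f v0}, ε g) • Pw := by
    rw [hTh]; simp [hvw.symm]
  have T0 : ∀ u, u ≠ v0 → u ≠ w0 → Th u = 0 := by
    intro u h1 h2; rw [hTh]; simp [h1, h2]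
  -- an edge incident to v0 or w0 other than via e0's endpoints
  have hno : ∀ u : V, inc e0 u → u = v0 ∨ u = w0 := by
    intro u hu
    rcases hinc2 e0 v0 w0 u hv hw hu with h | h | h
    · exact absurd h hvw
    · exact Or.inl h.symm
    · exact Or.inr h.symm
  -- divisibility of the single values
  have hdvdv : ∀ g : E, g ≠ e0 → inc g v0 → α g ∣ Pv := by
    intro g hg hgv
    exact Finset.dvd_prod_of_mem _ (by simp [hg, hgv])
  have hdvdw : ∀ g : E, g ≠ e0 → inc g w0 → α g ∣ Pw := by
    intro g hg hgv
    exact Finset.dvd_prod_of_mem _ (by simp [hg, hgv])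
  -- rewrite the two products as products over subtypes
  set s : Finset {f // inc f v0} := Finset.univ.erase ⟨e0, hv⟩ with hs
  have hPv' : Pv = ∏ x ∈ s, α (x : E) := by
    rw [hPv, hs]
    refine Finset.prod_bij'
      (fun g hg => ⟨g, (Finset.mem_filter.mp (Finset.mem_of_mem_erase hg)).2⟩)
      (fun x _ => (x : E)) ?_ ?_ ?_ ?_ ?_
    · intro a ha
      rw [Finset.mem_erase]
      exact ⟨fun h => (Finset.mem_erase.mp ha).1 (congrArg Subtype.val h), Finset.mem_univ _⟩
    · intro x hx
      rw [Finset.mem_erase, Finset.mem_filter]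
      exact ⟨fun h => (Finset.mem_erase.mp hx).1 (Subtype.ext h), Finset.mem_univ _, x.2⟩
    · intros; rfl
    · intros; rfl
    · intros; rfl
  have hPw' : Pw = ∏ x ∈ (Finset.univ.erase (⟨e0, hw⟩ : {f // inc f w0})), α (x : E) := by
    rw [hPwdef]
    refine Finset.prod_bij'
      (fun g hg => ⟨g, (Finset.mem_filter.mp (Finset.mem_of_mem_erase hg)).2⟩)
      (fun x _ => (x : E)) ?_ ?_ ?_ ?_ ?_
    · intro a ha
      rw [Finset.mem_erase]
      exact ⟨fun h => (Finset.mem_erase.mp ha).1 (congrArg Subtype.val h), Finset.mem_univ _⟩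
    · intro x hx
      rw [Finset.mem_erase, Finset.mem_filter]
      exact ⟨fun h => (Finset.mem_erase.mp hx).1 (Subtype.ext h), Finset.mem_univ _, x.2⟩
    · intros; rfl
    · intros; rfl
    · intros; rfl
  -- transport Pw back to v0 via the connection
  have hPw2 : Pw = ∏ x ∈ s, α ((nab x : E)) := by
    rw [hPw']
    refine (Finset.prod_nbij' (fun x => nab x) (fun y => nab.symm y) ?_ ?_ ?_ ?_ ?_).symm
    · intro a ha
      rw [Finset.mem_erase]
      refine ⟨fun h => (Finset.mem_erase.mp ha).1 ?_, Finset.mem_univ _⟩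
      rw [← hfix] at h
      exact nab.injective h
    · intro a ha
      rw [Finset.mem_erase]
      refine ⟨fun h => (Finset.mem_erase.mp ha).1 ?_, Finset.mem_univ _⟩
      have h2 := (Equiv.symm_apply_eq nab).mp h
      rw [hfix] at h2
      exact h2
    · intros; simp
    · intros; simp
    · intros; rfl
  have hPw3 : Pw = ∏ x ∈ s, (ε x • α (x : E) + kk x • α e0) :=
    hPw2.trans (Finset.prod_congr rfl fun x _ => hrel x)
  have hepsall : (∏ g : {f // inc f v0}, ε g) = ∏ g ∈ s, ε g := by
    rw [hs, ← Finset.prod_erase_mul (a := (⟨e0, hv⟩ : {f // inc f v0})) _ _ (Finset.mem_univ _),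
      hε0, mul_one]
  have hsq : (∏ g ∈ s, ε g) * (∏ g ∈ s, ε g) = 1 := by
    rw [← Finset.prod_mul_distrib]
    refine Finset.prod_eq_one fun g _ => ?_
    rcases hε g with h | h <;> simp [h]
  have hhead : (∏ x ∈ s, ε x) • ∏ x ∈ s, (ε x • α (x : E)) = Pv := by
    rw [hPv']
    simp only [smul_eq_C_mul]
    rw [Finset.prod_mul_distrib, ← map_prod, ← mul_assoc, ← map_mul, hsq, map_one, one_mul]
  -- the main divisibility for e0
  have hmain : α e0 ∣ Th v0 - Th w0 := by
    rw [Tv, Tw, hepsall, hPw3, ← hhead, ← smul_sub, smul_eq_C_mul]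
    refine Dvd.dvd.mul_left ?_ _
    refine dvd_prod_sub_prod s _ _ _ fun x _ => ?_
    have : ε x • α (x : E) - (ε x • α (x : E) + kk x • α e0) = -(kk x • α e0) := by ring
    rw [this, dvd_neg, smul_eq_C_mul]
    exact Dvd.dvd.mul_left dvd_rfl _
  -- now the case analysis
  intro g a b ha hb hne
  have hgv : inc g a := ha
  by_cases hav : a = v0
  · subst hav
    by_cases hbw : b = w0
    · subst hbw
      by_cases hge : g = e0
      · subst hge; exact hmain
      · rw [Tv, Tw]
        exact dvd_sub (hdvdv g hge ha) (hsmul _ _ _ (hdvdw g hge hb))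
    · rw [T0 b (Ne.symm hne) hbw, sub_zero, Tv]
      have hge : g ≠ e0 := by
        rintro rfl
        rcases hno b hb with h | h
        · exact hne h.symm
        · exact hbw h
      exact hdvdv g hge ha
  · by_cases haw : a = w0
    · subst haw
      by_cases hbv : b = v0
      · subst hbv
        rw [dvd_sub_comm]
        by_cases hge : g = e0
        · subst hge; exact hmain
        · rw [Tv, Tw]
          exact dvd_sub (hdvdv g hge hb) (hsmul _ _ _ (hdvdw g hge ha))
      · rw [T0 b hbv (Ne.symm hne), sub_zero, Tw]
        have hge : g ≠ e0 := by
          rintro rfl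
          rcases hno b hb with h | h
          · exact hbv h
          · exact hne h.symm
        exact hsmul _ _ _ (hdvdw g hge ha)
    · rw [T0 a hav haw, zero_sub, dvd_neg]
      by_cases hbv : b = v0
      · subst hbv
        rw [Tv]
        have hge : g ≠ e0 := by
          rintro rfl
          rcases hno a ha with h | h
          · exact hav h
          · exact haw h
        exact hdvdv g hge hb
      · by_cases hbw : b = w0
        · subst hbw
          rw [Tw]
          have hge : g ≠ e0 := by
            rintro rfl
            rcases hno a ha with h | h
            · exact hav h
            · exact haw h
          exact hsmul _ _ _ (hdvdw g hge hb)
        · rw [T0 b hbv hbw]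
          exact dvd_zero _
end

section
/- In an abstract GKM graph (Γ,α) with chosen signs of weights, the Thom classes of any two vertices define, up to sign, the same element in the (nonequivariant) graph cohomology H*(Γ,α) = H*_T(Γ,α)/R^+ · H*_T(Γ,α). Concretely: for any two vertices v, w, there exists a sign ε ∈ {±1} with Th_v − ε Th_w ∈ R^+ · H*_T(Γ,α). -/
open MvPolynomial Finset

set_option synthInstance.maxHeartbeats 400000
set_option maxHeartbeats 1000000

lemma homog_mem_spanX {k : ℕ} {p : MvPolynomial (Fin k) ℤ} (hp : p.IsHomogeneous 1) :
    p ∈ Ideal.span (Set.range (X : Fin k → MvPolynomial (Fin k) ℤ)) := by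
  rw [← Set.image_univ, mem_ideal_span_X_image]
  intro m hm
  have h1 : (Finsupp.weight 1) m = 1 := hp (mem_support_iff.mp hm)
  have hm0 : m ≠ 0 := by rintro rfl; simp at h1
  obtain ⟨i, hi⟩ := Finsupp.ne_iff.mp hm0
  exact ⟨i, trivial, by simpa using hi⟩

lemma zsmul_eq_cast_mul {R : Type*} [CommRing R] (n : ℤ) (x : R) : n • x = (n : R) * x := by
  rw [← Int.cast_smul_eq_zsmul R, smul_eq_mul]

/-- Equivariant graph cohomology of a labelled graph (weights given as polynomials,
with chosen signs), as a submodule of `⊕_{v} R`. -/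
noncomputable def gkmCohom3 {V E : Type} {k : ℕ} (inc : E → V → Prop)
    (α : E → MvPolynomial (Fin k) ℤ) :
    Submodule (MvPolynomial (Fin k) ℤ) (V → MvPolynomial (Fin k) ℤ) where
  carrier := {f | ∀ (e : E) (a b : V), inc e a → inc e b → a ≠ b → α e ∣ f a - f b}
  add_mem' := by
    intro f g hf hg e a b ha hb hab
    have h := dvd_add (hf e a b ha hb hab) (hg e a b ha hb hab)
    simpa [add_sub_add_comm] using h
  zero_mem' := by intro e a b _ _ _; simp
  smul_mem' := by
    intro r f hf e a b ha hb hab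
    have h := (hf e a b ha hb hab).mul_left r
    simpa [Pi.smul_apply, smul_eq_mul, mul_sub] using h

/-- The Thom class of a vertex `v`: the tuple equal to the product of the weights of the
edges at `v` at the vertex `v`, and `0` elsewhere. -/
noncomputable def vertexThom {V E : Type} [Fintype E] [DecidableEq V] {k : ℕ}
    (inc : E → V → Prop) [∀ e v, Decidable (inc e v)]
    (α : E → MvPolynomial (Fin k) ℤ) (v : V) : V → MvPolynomial (Fin k) ℤ :=
  fun u => if u = v then ∏ g ∈ Finset.univ.filter (fun g => inc g v), α g else 0

lemma stmt3_adj {V E : Type} [Fintype E] [DecidableEq E] [DecidableEq V] {k : ℕ}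
    (inc : E → V → Prop) [∀ e v, Decidable (inc e v)]
    (α : E → MvPolynomial (Fin k) ℤ)
    (hlin : ∀ e, (α e).IsHomogeneous 1)
    (hinc2 : ∀ (g : E) (a b c : V), inc g a → inc g b → inc g c → a = b ∨ a = c ∨ b = c)
    (hnab : ∀ (e : E) (v w : V) (hv : inc e v) (hw : inc e w), v ≠ w →
      ∃ (nab : {f // inc f v} ≃ {f // inc f w}) (ε kk : {f // inc f v} → ℤ),
        nab ⟨e, hv⟩ = ⟨e, hw⟩ ∧ ε ⟨e, hv⟩ = 1 ∧ kk ⟨e, hv⟩ = 0 ∧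
        ∀ g : {f // inc f v}, (ε g = 1 ∨ ε g = -1) ∧
          α (↑(nab g) : E) = ε g • α (↑g : E) + kk g • α e)
    (v w : V) (hvw : v ≠ w) (e : E) (hv : inc e v) (hw : inc e w) :
    ∃ ε : ℤ, (ε = 1 ∨ ε = -1) ∧
      vertexThom inc α v - ε • vertexThom inc α w ∈
        (Ideal.span (Set.range (X : Fin k → MvPolynomial (Fin k) ℤ))) •
          gkmCohom3 inc α := by
  obtain ⟨nab, ε, kk, hnabe, hεe, hkke, hG⟩ := hnab e v w hv hw hvw
  set Sv : Finset E := univ.filter (fun g => inc g v) with hSv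
  set Sw : Finset E := univ.filter (fun g => inc g w) with hSw
  have heSv : e ∈ Sv := by simp [hSv, hv]
  have heSw : e ∈ Sw := by simp [hSw, hw]
  set Pv : MvPolynomial (Fin k) ℤ := ∏ g ∈ Sv.erase e, α g with hPvdef
  set Pw : MvPolynomial (Fin k) ℤ := ∏ g ∈ Sw.erase e, α g with hPwdef
  set t : Finset {f // inc f v} := univ.erase ⟨e, hv⟩ with ht
  set ε₀ : ℤ := ∏ g ∈ t, ε g with hε₀def
  have hε₀ : ε₀ = 1 ∨ ε₀ = -1 := by
    refine Finset.prod_induction ε (fun x => x = 1 ∨ x = -1) ?_ (Or.inl rfl) ?_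
    · rintro a b (rfl | rfl) (rfl | rfl) <;> norm_num
    · exact fun g _ => (hG g).1
  have hε₀sq : ε₀ * ε₀ = 1 := by rcases hε₀ with h | h <;> rw [h] <;> norm_num
  -- rewrite Pv as a product over the subtype
  have hPv : Pv = ∏ g ∈ t, α (↑g : E) := by
    rw [hPvdef]
    refine Finset.prod_nbij' (fun h => if hh : inc h v then ⟨h, hh⟩ else ⟨e, hv⟩)
      (fun g => (↑g : E)) ?_ ?_ ?_ ?_ ?_
    · intro a ha
      have h1 : a ≠ e := (Finset.mem_erase.mp ha).1
      have h2 : inc a v := by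
        have := (Finset.mem_erase.mp ha).2; simpa [hSv] using this
      simp [ht, h2, Finset.mem_erase, Subtype.ext_iff, h1]
    · intro g hg
      have h1 : (↑g : E) ≠ e := by
        intro h; exact (Finset.mem_erase.mp hg).1 (Subtype.ext h)
      simp [hSv, Finset.mem_erase, h1, g.2]
    · intro a ha
      have h2 : inc a v := by
        have := (Finset.mem_erase.mp ha).2; simpa [hSv] using this
      simp [h2]
    · intro g hg; simp [g.2]
    · intro a ha
      have h2 : inc a v := by
        have := (Finset.mem_erase.mp ha).2; simpa [hSv] using this
      simp [h2]
  have hPw : Pw = ∏ g ∈ t, α (↑(nab g) : E) := by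
    rw [hPwdef]
    refine Finset.prod_nbij' (fun h => if hh : inc h w then nab.symm ⟨h, hh⟩ else ⟨e, hv⟩)
      (fun g => (↑(nab g) : E)) ?_ ?_ ?_ ?_ ?_
    · intro a ha
      have h1 : a ≠ e := (Finset.mem_erase.mp ha).1
      have h2 : inc a w := by
        have := (Finset.mem_erase.mp ha).2; simpa [hSw] using this
      have h3 : nab.symm ⟨a, h2⟩ ≠ ⟨e, hv⟩ := by
        intro h
        have h4 : (⟨a, h2⟩ : {f // inc f w}) = ⟨e, hw⟩ := by
          rw [← hnabe, ← h]; simp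
        exact h1 (congrArg Subtype.val h4)
      simp [ht, h2, Finset.mem_erase, h3]
    · intro g hg
      have h1 : nab g ≠ ⟨e, hw⟩ := by
        intro h
        have h2 : g = ⟨e, hv⟩ := by
          have h3 := congrArg nab.symm h
          rw [Equiv.symm_apply_apply, ← hnabe, Equiv.symm_apply_apply] at h3
          exact h3
        exact (Finset.mem_erase.mp hg).1 h2
      have h2 : (↑(nab g) : E) ≠ e := by
        intro h; exact h1 (Subtype.ext h)
      simp [hSw, Finset.mem_erase, h2, (nab g).2]
    · intro a ha
      have h2 : inc a w := by
        have := (Finset.mem_erase.mp ha).2; simpa [hSw] using this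
      simp [h2]
    · intro g hg; simp [(nab g).2]
    · intro a ha
      have h2 : inc a w := by
        have := (Finset.mem_erase.mp ha).2; simpa [hSw] using this
      simp [h2]
  -- the key divisibility
  have hdvd : α e ∣ Pw - ε₀ • Pv := by
    rw [← Ideal.mem_span_singleton, ← Ideal.Quotient.eq_zero_iff_mem, map_sub, sub_eq_zero]
    set q := Ideal.Quotient.mk (Ideal.span {α e}) with hq
    have hqe : q (α e) = 0 :=
      Ideal.Quotient.eq_zero_iff_mem.mpr (Ideal.mem_span_singleton_self _)
    calc q Pw = ∏ g ∈ t, q (α (↑(nab g) : E)) := by rw [hPw, map_prod]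
      _ = ∏ g ∈ t, (ε g : MvPolynomial (Fin k) ℤ ⧸ Ideal.span {α e}) * q (α (↑g : E)) := by
          refine Finset.prod_congr rfl fun g _ => ?_
          rw [(hG g).2, zsmul_eq_cast_mul, zsmul_eq_cast_mul, map_add, map_mul, map_mul,
            hqe, mul_zero, add_zero, map_intCast]
      _ = (ε₀ : MvPolynomial (Fin k) ℤ ⧸ Ideal.span {α e}) * ∏ g ∈ t, q (α (↑g : E)) := by
          rw [Finset.prod_mul_distrib, hε₀def]; push_cast; ring
      _ = q (ε₀ • Pv) := by
            rw [zsmul_eq_cast_mul, map_mul, map_intCast, hPv, map_prod]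
  have hdvdvw : α e ∣ Pv - ε₀ • Pw := by
    have h : Pv - ε₀ • Pw = (-ε₀) • (Pw - ε₀ • Pv) := by
      rw [zsmul_eq_cast_mul, zsmul_eq_cast_mul, zsmul_eq_cast_mul]; push_cast
      have h2 : (ε₀ : MvPolynomial (Fin k) ℤ) * ε₀ = 1 := by
        rw [← Int.cast_mul, hε₀sq]; norm_num
      linear_combination (-Pv) * h2
    rw [h, zsmul_eq_cast_mul]
    exact hdvd.mul_left _
  -- the class
  set f : V → MvPolynomial (Fin k) ℤ := fun u => if u = v then Pv else if u = w then ε₀ • Pw else 0 with hfdef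
  have hfv : f v = Pv := by simp [hfdef]
  have hfw : f w = ε₀ • Pw := by simp [hfdef, hvw, Ne.symm hvw]
  have hfz : ∀ u, u ≠ v → u ≠ w → f u = 0 := by intro u h1 h2; simp [hfdef, h1, h2]
  have hPvdvd : ∀ g : E, inc g v → g ≠ e → α g ∣ Pv := by
    intro g hg hge
    exact Finset.dvd_prod_of_mem α (by simp [hSv, Finset.mem_erase, hge, hg])
  have hPwdvd : ∀ g : E, inc g w → g ≠ e → α g ∣ ε₀ • Pw := by
    intro g hg hge
    rw [zsmul_eq_cast_mul]
    exact (Finset.dvd_prod_of_mem α (by simp [hSw, Finset.mem_erase, hge, hg])).mul_left _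
  have hdva : ∀ (a : V), inc e a → a ≠ v → a ≠ w → False := by
    intro a hga hav haw
    rcases hinc2 e a v w hga hv hw with h | h | h
    · exact hav h
    · exact haw h
    · exact hvw h
  have hfmem : f ∈ gkmCohom3 inc α := by
    intro g a b hga hgb hab
    by_cases hav : a = v
    · subst hav
      by_cases hbw : b = w
      · subst hbw
        rw [hfv, hfw]
        rcases eq_or_ne g e with rfl | hge
        · exact hdvdvw
        · exact (hPvdvd g hga hge).sub (hPwdvd g hgb hge)
      · have hbv : b ≠ a := Ne.symm hab
        rw [hfv, hfz b hbv hbw, sub_zero]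
        rcases eq_or_ne g e with rfl | hge
        · exact (hdva b hgb hbv hbw).elim
        · exact hPvdvd g hga hge
    · by_cases haw : a = w
      · subst haw
        by_cases hbv : b = v
        · subst hbv
          rw [hfw, hfv, ← dvd_neg, neg_sub]
          rcases eq_or_ne g e with rfl | hge
          · exact hdvdvw
          · exact (hPvdvd g hgb hge).sub (hPwdvd g hga hge)
        · have hbw : b ≠ a := Ne.symm hab
          rw [hfw, hfz b hbv hbw, sub_zero]
          rcases eq_or_ne g e with rfl | hge
          · exact (hdva b hgb hbv hbw).elim
          · exact hPwdvd g hga hge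
      · rw [hfz a hav haw, zero_sub, dvd_neg]
        by_cases hbv : b = v
        · subst hbv
          rw [hfv]
          rcases eq_or_ne g e with rfl | hge
          · exact (hdva a hga hav haw).elim
          · exact hPvdvd g hgb hge
        · by_cases hbw : b = w
          · subst hbw
            rw [hfw]
            rcases eq_or_ne g e with rfl | hge
            · exact (hdva a hga hav haw).elim
            · exact hPwdvd g hgb hge
          · rw [hfz b hbv hbw]; exact dvd_zero _
  -- the equality
  have hThm : vertexThom inc α v - (-ε₀) • vertexThom inc α w = α e • f := by
    funext u
    simp only [Pi.sub_apply, Pi.smul_apply, vertexThom, smul_eq_mul]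
    rw [← hSv, ← hSw]
    by_cases huv : u = v
    · subst huv
      simp only [if_pos rfl, if_neg hvw, hfv, smul_zero, sub_zero]
      exact (Finset.mul_prod_erase Sv α heSv).symm
    · by_cases huw : u = w
      · subst huw
        simp only [if_neg huv, if_pos rfl, hfw, zero_sub, neg_smul, neg_neg]
        rw [zsmul_eq_cast_mul, zsmul_eq_cast_mul, ← Finset.mul_prod_erase Sw α heSw]
        ring_nf
        simp only [if_pos trivial]
        ring
      · simp [if_neg huv, if_neg huw, hfz u huv huw]
  refine ⟨-ε₀, ?_, ?_⟩
  · rcases hε₀ with h | h <;> rw [h] <;> [right; left] <;> norm_num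
  · rw [hThm]
    exact Submodule.smul_mem_smul (homog_mem_spanX (hlin e)) hfmem

/-- In an abstract GKM graph `(Γ,α)` with chosen signs of the weights,
the Thom classes of any two vertices define, up to sign, the same element of the graph
cohomology `H*(Γ,α) = H*_T(Γ,α)/R⁺·H*_T(Γ,α)`: for any two vertices `v, w` there is a
sign `ε = ±1` with `Th_v - ε·Th_w ∈ R⁺·H*_T(Γ,α)`. -/
theorem stmt3 {V E : Type} [Fintype E] [DecidableEq E] [DecidableEq V] {k : ℕ}
    (inc : E → V → Prop) [∀ e v, Decidable (inc e v)]
    (α : E → MvPolynomial (Fin k) ℤ)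
    (hlin : ∀ e, (α e).IsHomogeneous 1)
    (hinc2 : ∀ (g : E) (a b c : V), inc g a → inc g b → inc g c → a = b ∨ a = c ∨ b = c)
    (hconn : ∀ a b : V, Relation.ReflTransGen
      (fun x y => x ≠ y ∧ ∃ e, inc e x ∧ inc e y) a b)
    (hnab : ∀ (e : E) (v w : V) (hv : inc e v) (hw : inc e w), v ≠ w →
      ∃ (nab : {f // inc f v} ≃ {f // inc f w}) (ε kk : {f // inc f v} → ℤ),
        nab ⟨e, hv⟩ = ⟨e, hw⟩ ∧ ε ⟨e, hv⟩ = 1 ∧ kk ⟨e, hv⟩ = 0 ∧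
        ∀ g : {f // inc f v}, (ε g = 1 ∨ ε g = -1) ∧
          α (↑(nab g) : E) = ε g • α (↑g : E) + kk g • α e) :
    ∀ v w : V, ∃ ε : ℤ, (ε = 1 ∨ ε = -1) ∧
      vertexThom inc α v - ε • vertexThom inc α w ∈
        (Ideal.span (Set.range (X : Fin k → MvPolynomial (Fin k) ℤ))) •
          gkmCohom3 inc α := by
  intro v w
  induction hconn v w with
  | refl => exact ⟨1, Or.inl rfl, by simp [one_smul]⟩
  | @tail b c hsteps hstep ih =>
    obtain ⟨hne, e, heb, hec⟩ := hstep
    obtain ⟨ε₁, hε₁, hm₁⟩ := ih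
    obtain ⟨ε₂, hε₂, hm₂⟩ := stmt3_adj inc α hlin hinc2 hnab _ _ hne e heb hec
    refine ⟨ε₁ * ε₂, ?_, ?_⟩
    · rcases hε₁ with rfl | rfl <;> rcases hε₂ with rfl | rfl <;> norm_num
    · have key : vertexThom inc α v - (ε₁ * ε₂) • vertexThom inc α c =
          (vertexThom inc α v - ε₁ • vertexThom inc α b) +
            ε₁ • (vertexThom inc α b - ε₂ • vertexThom inc α c) := by
        rw [smul_sub, mul_smul]; abel
      rw [key]
      refine Submodule.add_mem _ hm₁ ?_
      rw [← Int.cast_smul_eq_zsmul (MvPolynomial (Fin k) ℤ)]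
      exact Submodule.smul_mem _ _ hm₂
end

section
/- Let (Γ,α) be a 3-valent abstract GKM graph with labels in ℤ^2. Then H^4_T(Γ,α;ℚ) is spanned as a ℚ-vector space by the Thom classes of the (oriented) edges of Γ together with the subspace R_ℚ^4 · 1 (degree-4 polynomials times the unit class). -/
open MvPolynomial Finset

noncomputable section

/-- Rational equivariant graph cohomology for a graph with oriented edges
`e : src e → tgt e`, as a submodule of `⊕_v R_ℚ`. -/
def gkmCohom5 {V E : Type} (src tgt : E → V) (w : E → MvPolynomial (Fin 2) ℚ) :
    Submodule (MvPolynomial (Fin 2) ℚ) (V → MvPolynomial (Fin 2) ℚ) where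
  carrier := {f | ∀ e : E, w e ∣ f (src e) - f (tgt e)}
  add_mem' := by
    intro f g hf hg e
    have h := dvd_add (hf e) (hg e)
    simpa [add_sub_add_comm] using h
  zero_mem' := by intro e; simp
  smul_mem' := by
    intro r f hf e
    have h := (hf e).mul_left r
    simpa [Pi.smul_apply, smul_eq_mul, mul_sub] using h

/-- The finset of edges at a vertex `v`. -/
def edgesAt {V E : Type} [Fintype E] [DecidableEq V] (src tgt : E → V) (v : V) :
    Finset E :=
  Finset.univ.filter fun g => src g = v ∨ tgt g = v

namespace Stmt5Aux

abbrev P2 := MvPolynomial (Fin 2) ℚ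

def c0 (p : P2) : ℚ := coeff (Finsupp.single 0 1) p
def c1 (p : P2) : ℚ := coeff (Finsupp.single 1 1) p

lemma degree_fin2 (d : Fin 2 →₀ ℕ) : d.degree = d 0 + d 1 := by
  have h : d.degree = ∑ i : Fin 2, d i := by
    rw [Finsupp.degree]
    apply Finset.sum_subset (Finset.subset_univ _)
    intro i _ hi
    exact Finsupp.notMem_support_iff.mp hi
  rw [h, Fin.sum_univ_two]

lemma repr1 (p : P2) (hp : p.IsHomogeneous 1) :
    p = C (c0 p) * X 0 + C (c1 p) * X 1 := by
  ext d
  rw [coeff_add, coeff_C_mul, coeff_C_mul, coeff_X', coeff_X']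
  by_cases hd : d.degree = 1
  · have h2 : d 0 + d 1 = 1 := by rw [← degree_fin2]; exact hd
    have hcase : (d 0 = 1 ∧ d 1 = 0) ∨ (d 0 = 0 ∧ d 1 = 1) := by omega
    rcases hcase with ⟨h0, h1⟩ | ⟨h0, h1⟩
    · have hd0 : d = Finsupp.single (0 : Fin 2) 1 := by
        ext i; fin_cases i <;> simp [Finsupp.single_apply, h0, h1]
      rw [hd0]
      simp [c0, c1, Finsupp.single_eq_single_iff]
    · have hd0 : d = Finsupp.single (1 : Fin 2) 1 := by
        ext i; fin_cases i <;> simp [Finsupp.single_apply, h0, h1]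
      rw [hd0]
      simp [c0, c1, Finsupp.single_eq_single_iff]
  · have h0 : Finsupp.single (0 : Fin 2) 1 ≠ d := by
      intro h; apply hd; rw [← h, degree_fin2]; simp
    have h1 : Finsupp.single (1 : Fin 2) 1 ≠ d := by
      intro h; apply hd; rw [← h, degree_fin2]; simp
    rw [if_neg h0, if_neg h1, hp.coeff_eq_zero hd]
    ring

lemma eq_zero_of_coords {p : P2} (hp : p.IsHomogeneous 1) (h0 : c0 p = 0) (h1 : c1 p = 0) :
    p = 0 := by
  rw [repr1 p hp, h0, h1]; simp

/-- determinant of two linear forms -/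
def det2 (p q : P2) : ℚ := c0 p * c1 q - c1 p * c0 q

lemma c0_add (p q : P2) : c0 (p + q) = c0 p + c0 q := coeff_add _ _ _
lemma c1_add (p q : P2) : c1 (p + q) = c1 p + c1 q := coeff_add _ _ _
lemma c0_C_mul (c : ℚ) (p : P2) : c0 (C c * p) = c * c0 p := coeff_C_mul _ _ _
lemma c1_C_mul (c : ℚ) (p : P2) : c1 (C c * p) = c * c1 p := coeff_C_mul _ _ _

/-- the kernel point of a linear form -/
def kpt (p : P2) : Fin 2 → ℚ := ![c1 p, -(c0 p)]

lemma eval_kpt {q : P2} (hq : q.IsHomogeneous 1) (p : P2) :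
    eval (kpt p) q = det2 q p := by
  conv_lhs => rw [repr1 q hq]
  simp [kpt, det2]
  ring

lemma eval_kpt_self {p : P2} (hp : p.IsHomogeneous 1) : eval (kpt p) p = 0 := by
  rw [eval_kpt hp]
  simp [det2]
  ring

lemma eval_kpt_zero {p r : P2} (h : p ∣ r) (hp : p.IsHomogeneous 1) :
    eval (kpt p) r = 0 := by
  obtain ⟨t, rfl⟩ := h
  rw [map_mul, eval_kpt_self hp, zero_mul]

/-- homogeneity of a cofactor -/
lemma factor_homog {α q : P2} {m n : ℕ} (hα : α.IsHomogeneous m) (h0 : α ≠ 0)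
    (h : (α * q).IsHomogeneous (m + n)) : q.IsHomogeneous n := by
  have key : ∀ k, k ≠ n → homogeneousComponent k q = 0 := by
    intro k hk
    by_cases hk2 : q.totalDegree < k
    · exact homogeneousComponent_eq_zero k q hk2
    · have h1 : α * q = ∑ i ∈ range (q.totalDegree + 1), α * homogeneousComponent i q := by
        rw [← Finset.mul_sum, sum_homogeneousComponent]
      have h2 := congrArg (homogeneousComponent (m + k)) h1
      rw [homogeneousComponent_of_mem ((mem_homogeneousSubmodule _ _).mpr h),
        if_neg (show ¬ m + k = m + n by omega), map_sum] at h2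
      have h3 : ∀ i ∈ range (q.totalDegree + 1),
          homogeneousComponent (m + k) (α * homogeneousComponent i q)
            = if i = k then α * homogeneousComponent i q else 0 := by
        intro i _
        rw [homogeneousComponent_of_mem ((mem_homogeneousSubmodule _ _).mpr
          (hα.mul (homogeneousComponent_isHomogeneous i q)))]
        by_cases hik : i = k
        · subst hik; rw [if_pos rfl, if_pos rfl]
        · rw [if_neg (show ¬ m + k = m + i by omega), if_neg hik]
      rw [Finset.sum_congr rfl h3, Finset.sum_ite_eq' _ k] at h2
      rw [if_pos (by rw [Finset.mem_range]; omega)] at h2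
      rcases mul_eq_zero.mp h2.symm with h | h
      · exact absurd h h0
      · exact h
  have hq : q = homogeneousComponent n q := by
    conv_lhs => rw [← sum_homogeneousComponent q]
    apply Finset.sum_eq_single
    · intro i _ hi; exact key i hi
    · intro hn
      exact homogeneousComponent_eq_zero n q (by rw [Finset.mem_range] at hn; omega)
  rw [hq]
  exact homogeneousComponent_isHomogeneous n q


lemma eq_of_coords {p q : P2} (hp : p.IsHomogeneous 1) (hq : q.IsHomogeneous 1)
    (h0 : c0 p = c0 q) (h1 : c1 p = c1 q) : p = q := by
  rw [repr1 p hp, repr1 q hq, h0, h1]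

lemma ne_zero_of_indep {α β : P2}
    (hind : ∀ c d : ℚ, C c * α + C d * β = 0 → c = 0 ∧ d = 0) : α ≠ 0 := by
  intro h
  have := hind 1 0 (by rw [h]; simp)
  exact one_ne_zero this.1

lemma combo_coords (c d : ℚ) (α β : P2) :
    c0 (C c * α + C d * β) = c * c0 α + d * c0 β ∧
      c1 (C c * α + C d * β) = c * c1 α + d * c1 β := by
  constructor
  · rw [c0_add, c0_C_mul, c0_C_mul]
  · rw [c1_add, c1_C_mul, c1_C_mul]

lemma det2_ne_zero {α β : P2} (hα : α.IsHomogeneous 1) (hβ : β.IsHomogeneous 1)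
    (hind : ∀ c d : ℚ, C c * α + C d * β = 0 → c = 0 ∧ d = 0) : det2 α β ≠ 0 := by
  intro hD
  have hα0 : α ≠ 0 := ne_zero_of_indep hind
  have hD' : c0 α * c1 β - c1 α * c0 β = 0 := hD
  by_cases ha0 : c0 α ≠ 0
  · have hcombo : C (c0 β) * α + C (-(c0 α)) * β = 0 := by
      apply eq_zero_of_coords ((hα.C_mul _).add (hβ.C_mul _))
      · rw [(combo_coords _ _ _ _).1]; ring
      · rw [(combo_coords _ _ _ _).2]; nlinarith [hD']
    exact ha0 (neg_eq_zero.mp (hind _ _ hcombo).2)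
  · push_neg at ha0
    have ha1 : c1 α ≠ 0 := by
      intro h; exact hα0 (eq_zero_of_coords hα ha0 h)
    have hcombo : C (c1 β) * α + C (-(c1 α)) * β = 0 := by
      apply eq_zero_of_coords ((hα.C_mul _).add (hβ.C_mul _))
      · rw [(combo_coords _ _ _ _).1]; nlinarith [hD']
      · rw [(combo_coords _ _ _ _).2]; ring
    exact ha1 (neg_eq_zero.mp (hind _ _ hcombo).2)

lemma prop_of_det2_eq_zero {q β : P2} (hq : q.IsHomogeneous 1) (hβ : β.IsHomogeneous 1)
    (hβ0 : β ≠ 0) (hD : det2 q β = 0) : ∃ s : ℚ, q = C s * β := by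
  have hD' : c0 q * c1 β - c1 q * c0 β = 0 := hD
  by_cases hb0 : c0 β ≠ 0
  · refine ⟨c0 q / c0 β, eq_of_coords hq (hβ.C_mul _) ?_ ?_⟩
    · rw [c0_C_mul]; field_simp
    · rw [c1_C_mul]; field_simp; nlinarith [hD']
  · push_neg at hb0
    have hb1 : c1 β ≠ 0 := fun h => hβ0 (eq_zero_of_coords hβ hb0 h)
    refine ⟨c1 q / c1 β, eq_of_coords hq (hβ.C_mul _) ?_ ?_⟩
    · rw [c0_C_mul]; field_simp; nlinarith [hD']
    · rw [c1_C_mul]; field_simp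

lemma span_two {α β q : P2} (hα : α.IsHomogeneous 1) (hβ : β.IsHomogeneous 1)
    (hq : q.IsHomogeneous 1) (hD : det2 α β ≠ 0) :
    ∃ c d : ℚ, q = C c * α + C d * β := by
  have hD' : c0 α * c1 β - c1 α * c0 β ≠ 0 := hD
  refine ⟨(c0 q * c1 β - c1 q * c0 β) / det2 α β,
          (c0 α * c1 q - c1 α * c0 q) / det2 α β,
          eq_of_coords hq ((hα.C_mul _).add (hβ.C_mul _)) ?_ ?_⟩
  · rw [(combo_coords _ _ _ _).1]
    show c0 q = _ * c0 α + _ * c0 β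
    unfold det2
    field_simp
    have hD'' : c1 β * c0 α - c0 β * c1 α ≠ 0 := by intro h; apply hD'; linarith
    field_simp
    ring
  · rw [(combo_coords _ _ _ _).2]
    show c1 q = _ * c1 α + _ * c1 β
    unfold det2
    field_simp
    have hD'' : c1 β * c0 α - c0 β * c1 α ≠ 0 := by intro h; apply hD'; linarith
    field_simp
    ring

lemma homog2_of_dvd {p α q : P2} (hp : p.IsHomogeneous 2) (hα : α.IsHomogeneous 1)
    (hα0 : α ≠ 0) (hq : p = α * q) : q.IsHomogeneous 1 := by
  apply factor_homog hα hα0 (m := 1) (n := 1)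
  rw [← hq]
  exact hp

/-- two independent divisors -/
lemma helper2 {p α β : P2} (hp : p.IsHomogeneous 2) (hα : α.IsHomogeneous 1)
    (hβ : β.IsHomogeneous 1) (hD : det2 α β ≠ 0) (hdα : α ∣ p) (hdβ : β ∣ p) :
    ∃ s : ℚ, p = C s * (α * β) := by
  have hα0 : α ≠ 0 := by
    intro h
    apply hD
    rw [h]
    simp [det2, c0, c1]
  have hβ0 : β ≠ 0 := by
    intro h
    apply hD
    rw [h]
    simp [det2, c0, c1]
  obtain ⟨q, hq⟩ := hdα
  have hq1 : q.IsHomogeneous 1 := homog2_of_dvd hp hα hα0 hq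
  have he1 : eval (kpt β) p = 0 := eval_kpt_zero hdβ hβ
  rw [hq, map_mul, eval_kpt hα, eval_kpt hq1] at he1
  rcases mul_eq_zero.mp he1 with h | h
  · exact absurd h hD
  · obtain ⟨s, hs⟩ := prop_of_det2_eq_zero hq1 hβ hβ0 h
    exact ⟨s, by rw [hq, hs]; ring⟩

/-- three pairwise independent divisors kill a degree 2 form -/
lemma helper1 {p α β γ : P2} (hp : p.IsHomogeneous 2) (hα : α.IsHomogeneous 1)
    (hβ : β.IsHomogeneous 1) (hγ : γ.IsHomogeneous 1)
    (hDαβ : det2 α β ≠ 0) (hDαγ : det2 α γ ≠ 0) (hDβγ : det2 β γ ≠ 0)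
    (hdα : α ∣ p) (hdβ : β ∣ p) (hdγ : γ ∣ p) : p = 0 := by
  obtain ⟨s, hs⟩ := helper2 hp hα hβ hDαβ hdα hdβ
  have he : eval (kpt γ) p = 0 := eval_kpt_zero hdγ hγ
  rw [hs, map_mul, map_mul, eval_C, eval_kpt hα, eval_kpt hβ] at he
  have hs0 : s = 0 := by
    have h2 : det2 α γ * det2 β γ ≠ 0 := mul_ne_zero hDαγ hDβγ
    rcases mul_eq_zero.mp ((mul_assoc s _ _ ▸ he : s * (det2 α γ * det2 β γ) = 0)) with h | h
    · exact h
    · exact absurd h h2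
  rw [hs, hs0]
  simp

/-- one divisor, expansion in the other two -/
lemma helper3 {p α β γ : P2} (hp : p.IsHomogeneous 2) (hα : α.IsHomogeneous 1)
    (hβ : β.IsHomogeneous 1) (hγ : γ.IsHomogeneous 1) (hα0 : α ≠ 0)
    (hD : det2 β γ ≠ 0) (hdα : α ∣ p) :
    ∃ s t : ℚ, p = C s * (α * β) + C t * (α * γ) := by
  obtain ⟨q, hq⟩ := hdα
  have hq1 : q.IsHomogeneous 1 := homog2_of_dvd hp hα hα0 hq
  obtain ⟨s, t, hst⟩ := span_two hβ hγ hq1 hD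
  exact ⟨s, t, by rw [hq, hst]; ring⟩

end Stmt5Aux

/-- Let `(Γ,α)` be a 3-valent abstract GKM graph with labels in `ℤ²`.
Then `H⁴_T(Γ,α;ℚ)` (elements of `H*_T(Γ,α;ℚ)` all of whose components are homogeneous of
polynomial degree 2, i.e. cohomological degree 4) is spanned as a ℚ-vector space by the
Thom classes of the (oriented) edges of `Γ` together with `R_ℚ⁴·1` (degree-4 polynomials
times the unit class).  The Thom class `Th_e` of an oriented edge `e` from `v` to `w` is
the class supported on `{v,w}` whose value at each endpoint `u` is a nonzero rational
multiple of the product of the other two weights at `u`. -/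
theorem stmt5 {V E : Type} [Fintype V] [Fintype E] [DecidableEq V] [DecidableEq E]
    (src tgt : E → V) (hst : ∀ e, src e ≠ tgt e)
    (w : E → MvPolynomial (Fin 2) ℚ)
    (hhom : ∀ e, (w e).IsHomogeneous 1)
    (hval : ∀ v, (edgesAt src tgt v).card = 3)
    (hindep : ∀ (v : V) (e f : E), e ∈ edgesAt src tgt v → f ∈ edgesAt src tgt v →
      e ≠ f → ∀ c d : ℚ, C c * w e + C d * w f = 0 → c = 0 ∧ d = 0)
    (hconn : ∀ a b : V, Relation.ReflTransGen
      (fun x y => ∃ e, (src e = x ∧ tgt e = y) ∨ (src e = y ∧ tgt e = x)) a b)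
    (Th : E → V → MvPolynomial (Fin 2) ℚ)
    (hThH : ∀ e, Th e ∈ gkmCohom5 src tgt w)
    (hThsupp : ∀ e u, u ≠ src e → u ≠ tgt e → Th e u = 0)
    (hThval : ∀ e u, u = src e ∨ u = tgt e → ∃ c : ℚ, c ≠ 0 ∧
      Th e u = C c * ∏ g ∈ (edgesAt src tgt u).erase e, w g)
    (hThhom : ∀ e u, (Th e u).IsHomogeneous 2) :
    ∀ f : V → MvPolynomial (Fin 2) ℚ, f ∈ gkmCohom5 src tgt w →
      (∀ u, (f u).IsHomogeneous 2) →
      f ∈ Submodule.span ℚ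
        (Set.range Th ∪
          {g : V → MvPolynomial (Fin 2) ℚ |
            ∃ p : MvPolynomial (Fin 2) ℚ, p.IsHomogeneous 2 ∧ g = fun _ => p}) := by
  classical
  intro f hf hfhom
  have main : ∀ n : ℕ, ∀ Z : Finset V, ∀ h : V → MvPolynomial (Fin 2) ℚ,
      Zᶜ.card ≤ n → Z.Nonempty → h ∈ gkmCohom5 src tgt w →
      (∀ u, (h u).IsHomogeneous 2) → (∀ v ∈ Z, h v = 0) →
      h ∈ Submodule.span ℚ (Set.range Th) := by
    intro n
    induction n with
    | zero =>
      intro Z h hcard _ _ _ hZ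
      have hZu : ∀ v : V, v ∈ Z := by
        intro v
        by_contra hv
        have : v ∈ Zᶜ := Finset.mem_compl.mpr hv
        have := Finset.card_pos.mpr ⟨v, this⟩
        omega
      have h0 : h = 0 := funext fun v => hZ v (hZu v)
      rw [h0]; exact Submodule.zero_mem _
    | succ n ih =>
      intro Z h hcard hZne hh hhomg hZ
      by_cases hC : Zᶜ = ∅
      · have hZu : ∀ v : V, v ∈ Z := by
          intro v
          by_contra hv
          exact (Finset.eq_empty_iff_forall_notMem.mp hC v) (Finset.mem_compl.mpr hv)
        have h0 : h = 0 := funext fun v => hZ v (hZu v)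
        rw [h0]; exact Submodule.zero_mem _
      · obtain ⟨u, hu⟩ := Finset.nonempty_iff_ne_empty.mpr hC
        have hu' : u ∉ Z := Finset.mem_compl.mp hu
        obtain ⟨a0, ha0⟩ := hZne
        have cross : ∃ (e' : E) (a b : V), a ∈ Z ∧ b ∉ Z ∧
            ((src e' = a ∧ tgt e' = b) ∨ (src e' = b ∧ tgt e' = a)) := by
          have H : ∀ x : V, x ∈ Z ∨ ∃ (e' : E) (a b : V), a ∈ Z ∧ b ∉ Z ∧
              ((src e' = a ∧ tgt e' = b) ∨ (src e' = b ∧ tgt e' = a)) := by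
            intro x
            have hx := hconn a0 x
            induction hx with
            | refl => exact Or.inl ha0
            | tail hab hr ihp =>
              rename_i x1 x2
              rcases ihp with hxZ | hcross
              · obtain ⟨e', he'⟩ := hr
                by_cases hx2 : x2 ∈ Z
                · exact Or.inl hx2
                · exact Or.inr ⟨e', x1, x2, hxZ, hx2, he'⟩
              · exact Or.inr hcross
          rcases H u with h1 | h2
          · exact absurd h1 hu'
          · exact h2
        obtain ⟨e, a, b, haZ, hbZ, hcr⟩ := cross
        set A := edgesAt src tgt b with hA
        have hmemE : ∀ g, g ∈ A ↔ (src g = b ∨ tgt g = b) := by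
          intro g
          rw [hA, edgesAt, Finset.mem_filter]
          simp
        set other : E → V := fun g => if src g = b then tgt g else src g with hother
        have hother_pos : ∀ g, src g = b → other g = tgt g := by
          intro g hg
          show (if src g = b then tgt g else src g) = tgt g
          rw [if_pos hg]
        have hother_neg : ∀ g, src g ≠ b → other g = src g := by
          intro g hg
          show (if src g = b then tgt g else src g) = src g
          rw [if_neg hg]
        have hfact : ∀ g ∈ A, (src g = b ∧ other g = tgt g) ∨
            (tgt g = b ∧ src g ≠ b ∧ other g = src g) := by
          intro g hg
          by_cases hs : src g = b
          · exact Or.inl ⟨hs, hother_pos g hs⟩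
          · exact Or.inr ⟨((hmemE g).mp hg).resolve_left hs, hs, hother_neg g hs⟩
        have hdvd : ∀ g ∈ A, other g ∈ Z → w g ∣ h b := by
          intro g hg hgZ
          have hd := hh g
          rcases hfact g hg with ⟨h1, h2⟩ | ⟨h1, _, h2⟩
          · rw [h1] at hd
            have h0 : h (tgt g) = 0 := by rw [← h2]; exact hZ _ hgZ
            rw [h0, sub_zero] at hd; exact hd
          · rw [h1] at hd
            have h0 : h (src g) = 0 := by rw [← h2]; exact hZ _ hgZ
            rw [h0, zero_sub] at hd
            exact dvd_neg.mp hd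
        have heA : e ∈ A ∧ other e ∈ Z := by
          rcases hcr with ⟨h1, h2⟩ | ⟨h1, h2⟩
          · have hsb : src e ≠ b := by rw [h1]; intro hab; exact hbZ (hab ▸ haZ)
            refine ⟨(hmemE e).mpr (Or.inr h2), ?_⟩
            rw [hother_neg e hsb, h1]; exact haZ
          · refine ⟨(hmemE e).mpr (Or.inl h1), ?_⟩
            rw [hother_pos e h1, h2]; exact haZ
        have hcard3 : A.card = 3 := by rw [hA]; exact hval b
        have he2 : (A.erase e).card = 2 := by
          rw [Finset.card_erase_of_mem heA.1, hcard3]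
        obtain ⟨y, z, hyz, hyz2⟩ := Finset.card_eq_two.mp he2
        have hyE : y ∈ A.erase e := by rw [hyz2]; exact Finset.mem_insert_self y {z}
        have hzE : z ∈ A.erase e := by
          rw [hyz2]; exact Finset.mem_insert_of_mem (Finset.mem_singleton_self z)
        have hyA : y ∈ A := Finset.mem_of_mem_erase hyE
        have hzA : z ∈ A := Finset.mem_of_mem_erase hzE
        have hye : y ≠ e := (Finset.mem_erase.mp hyE).1
        have hze : z ≠ e := (Finset.mem_erase.mp hzE).1
        have hAeq : A = insert e {y, z} := by
          rw [← hyz2, Finset.insert_erase heA.1]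
        have hdet : ∀ g g', g ∈ A → g' ∈ A → g ≠ g' → Stmt5Aux.det2 (w g) (w g') ≠ 0 := by
          intro g g' hg hg' hgg'
          refine Stmt5Aux.det2_ne_zero (hhom g) (hhom g') (fun c d hcd => ?_)
          exact hindep b g g' (hA ▸ hg) (hA ▸ hg') hgg' c d hcd
        set F : Finset E := A.filter (fun g => other g ∉ Z) with hF
        have hThb : ∀ g, g ∈ A → ∃ c : ℚ, c ≠ 0 ∧ Th g b = C c * ∏ g' ∈ A.erase g, w g' := by
          intro g hg
          have := hThval g b (by
            rcases (hmemE g).mp hg with h1 | h1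
            exacts [Or.inl h1.symm, Or.inr h1.symm])
          rw [← hA] at this
          exact this
        have key : ∃ d : E → ℚ, h b = ∑ g ∈ F, C (d g) * Th g b := by
          have hdvde : w e ∣ h b := hdvd e heA.1 heA.2
          by_cases hyZ : other y ∈ Z <;> by_cases hzZ : other z ∈ Z
          · -- all three back edges: h b = 0
            have hFe : F = ∅ := by
              rw [hF, Finset.filter_eq_empty_iff]
              intro g hg
              rw [hAeq] at hg
              simp only [Finset.mem_insert, Finset.mem_singleton] at hg
              rcases hg with rfl | rfl | rfl
              · simpa using heA.2
              · simpa using hyZ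
              · simpa using hzZ
            refine ⟨0, ?_⟩
            rw [hFe, Finset.sum_empty]
            exact Stmt5Aux.helper1 (hhomg b) (hhom e) (hhom y) (hhom z)
              (hdet e y heA.1 hyA (Ne.symm hye)) (hdet e z heA.1 hzA (Ne.symm hze))
              (hdet y z hyA hzA hyz) hdvde (hdvd y hyA hyZ) (hdvd z hzA hzZ)
          · -- e, y back; z forward
            have hFz : F = {z} := by
              ext g
              rw [hF, Finset.mem_filter, Finset.mem_singleton]
              constructor
              · rintro ⟨hgA, hgZ⟩
                rw [hAeq] at hgA
                simp only [Finset.mem_insert, Finset.mem_singleton] at hgA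
                rcases hgA with rfl | rfl | rfl
                · exact absurd heA.2 hgZ
                · exact absurd hyZ hgZ
                · rfl
              · rintro rfl; exact ⟨hzA, hzZ⟩
            obtain ⟨s, hs⟩ := Stmt5Aux.helper2 (hhomg b) (hhom e) (hhom y)
              (hdet e y heA.1 hyA (Ne.symm hye)) hdvde (hdvd y hyA hyZ)
            obtain ⟨c, hc0, hcz⟩ := hThb z hzA
            have herase : A.erase z = {e, y} := by
              rw [hAeq]
              ext g
              simp only [Finset.mem_erase, Finset.mem_insert, Finset.mem_singleton]
              constructor
              · rintro ⟨hgz, rfl | rfl | rfl⟩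
                · exact Or.inl rfl
                · exact Or.inr rfl
                · exact absurd rfl hgz
              · rintro (rfl | rfl)
                · exact ⟨Ne.symm hze, Or.inl rfl⟩
                · exact ⟨hyz, Or.inr (Or.inl rfl)⟩
            have hprod : ∏ g' ∈ A.erase z, w g' = w e * w y := by
              rw [herase, Finset.prod_pair (Ne.symm hye)]
            refine ⟨fun _ => s / c, ?_⟩
            rw [hFz, Finset.sum_singleton]
            show h b = C (s / c) * Th z b
            have hid : C (s / c) * (C c * (w e * w y)) = C s * (w e * w y) := by
              rw [← mul_assoc, ← C_mul, div_mul_cancel₀ s hc0]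
            rw [hcz, hprod, hid]
            exact hs
          · -- e, z back; y forward
            have hFy : F = {y} := by
              ext g
              rw [hF, Finset.mem_filter, Finset.mem_singleton]
              constructor
              · rintro ⟨hgA, hgZ⟩
                rw [hAeq] at hgA
                simp only [Finset.mem_insert, Finset.mem_singleton] at hgA
                rcases hgA with rfl | rfl | rfl
                · exact absurd heA.2 hgZ
                · rfl
                · exact absurd hzZ hgZ
              · rintro rfl; exact ⟨hyA, hyZ⟩
            obtain ⟨s, hs⟩ := Stmt5Aux.helper2 (hhomg b) (hhom e) (hhom z)
              (hdet e z heA.1 hzA (Ne.symm hze)) hdvde (hdvd z hzA hzZ)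
            obtain ⟨c, hc0, hcy⟩ := hThb y hyA
            have herase : A.erase y = {e, z} := by
              rw [hAeq]
              ext g
              simp only [Finset.mem_erase, Finset.mem_insert, Finset.mem_singleton]
              constructor
              · rintro ⟨hgy, rfl | rfl | rfl⟩
                · exact Or.inl rfl
                · exact absurd rfl hgy
                · exact Or.inr rfl
              · rintro (rfl | rfl)
                · exact ⟨Ne.symm hye, Or.inl rfl⟩
                · exact ⟨Ne.symm hyz, Or.inr (Or.inr rfl)⟩
            have hprod : ∏ g' ∈ A.erase y, w g' = w e * w z := by
              rw [herase, Finset.prod_pair (Ne.symm hze)]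
            refine ⟨fun _ => s / c, ?_⟩
            rw [hFy, Finset.sum_singleton]
            show h b = C (s / c) * Th y b
            have hid : C (s / c) * (C c * (w e * w z)) = C s * (w e * w z) := by
              rw [← mul_assoc, ← C_mul, div_mul_cancel₀ s hc0]
            rw [hcy, hprod, hid]
            exact hs
          · -- only e back; y, z forward
            have hFyz : F = {y, z} := by
              ext g
              rw [hF, Finset.mem_filter, Finset.mem_insert, Finset.mem_singleton]
              constructor
              · rintro ⟨hgA, hgZ⟩
                rw [hAeq] at hgA
                simp only [Finset.mem_insert, Finset.mem_singleton] at hgA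
                rcases hgA with rfl | rfl | rfl
                · exact absurd heA.2 hgZ
                · exact Or.inl rfl
                · exact Or.inr rfl
              · rintro (rfl | rfl)
                · exact ⟨hyA, hyZ⟩
                · exact ⟨hzA, hzZ⟩
            have hwe0 : w e ≠ 0 := Stmt5Aux.ne_zero_of_indep
              (fun c d hcd => hindep b e y (hA ▸ heA.1) (hA ▸ hyA) (Ne.symm hye) c d hcd)
            obtain ⟨s, t, hst'⟩ := Stmt5Aux.helper3 (hhomg b) (hhom e) (hhom y) (hhom z)
              hwe0 (hdet y z hyA hzA hyz) hdvde
            obtain ⟨cy, hcy0, hcyv⟩ := hThb y hyA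
            obtain ⟨cz, hcz0, hczv⟩ := hThb z hzA
            have heraseY : A.erase y = {e, z} := by
              rw [hAeq]
              ext g
              simp only [Finset.mem_erase, Finset.mem_insert, Finset.mem_singleton]
              constructor
              · rintro ⟨hgy, rfl | rfl | rfl⟩
                · exact Or.inl rfl
                · exact absurd rfl hgy
                · exact Or.inr rfl
              · rintro (rfl | rfl)
                · exact ⟨Ne.symm hye, Or.inl rfl⟩
                · exact ⟨Ne.symm hyz, Or.inr (Or.inr rfl)⟩
            have heraseZ : A.erase z = {e, y} := by
              rw [hAeq]
              ext g
              simp only [Finset.mem_erase, Finset.mem_insert, Finset.mem_singleton]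
              constructor
              · rintro ⟨hgz, rfl | rfl | rfl⟩
                · exact Or.inl rfl
                · exact Or.inr rfl
                · exact absurd rfl hgz
              · rintro (rfl | rfl)
                · exact ⟨Ne.symm hze, Or.inl rfl⟩
                · exact ⟨hyz, Or.inr (Or.inl rfl)⟩
            have hprodY : ∏ g' ∈ A.erase y, w g' = w e * w z := by
              rw [heraseY, Finset.prod_pair (Ne.symm hze)]
            have hprodZ : ∏ g' ∈ A.erase z, w g' = w e * w y := by
              rw [heraseZ, Finset.prod_pair (Ne.symm hye)]
            refine ⟨fun g => if g = y then t / cy else s / cz, ?_⟩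
            rw [hFyz, Finset.sum_pair hyz]
            rw [show ((fun g => if g = y then t / cy else s / cz) y) = t / cy from
                if_pos rfl,
              show ((fun g => if g = y then t / cy else s / cz) z) = s / cz from
                if_neg (Ne.symm hyz)]
            have hyid : C (t / cy) * (C cy * (w e * w z)) = C t * (w e * w z) := by
              rw [← mul_assoc, ← C_mul, div_mul_cancel₀ t hcy0]
            have hzid : C (s / cz) * (C cz * (w e * w y)) = C s * (w e * w y) := by
              rw [← mul_assoc, ← C_mul, div_mul_cancel₀ s hcz0]
            rw [hcyv, hprodY, hczv, hprodZ, hyid, hzid, hst']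
            ring
        obtain ⟨d, hd⟩ := key
        set h' : V → MvPolynomial (Fin 2) ℚ := h - ∑ g ∈ F, d g • Th g with hh'
        have hval' : ∀ v, h' v = h v - ∑ g ∈ F, C (d g) * Th g v := by
          intro v
          rw [hh']
          simp only [Pi.sub_apply, Finset.sum_apply, Pi.smul_apply,
            MvPolynomial.smul_eq_C_mul]
        have hmem' : h' ∈ gkmCohom5 src tgt w := by
          apply Submodule.sub_mem _ hh
          apply Submodule.sum_mem
          intro g _
          rw [← algebraMap_smul (MvPolynomial (Fin 2) ℚ) (d g) (Th g)]
          exact Submodule.smul_mem _ _ (hThH g)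
        have hhom' : ∀ v, (h' v).IsHomogeneous 2 := by
          intro v
          rw [hval' v]
          exact (hhomg v).sub (MvPolynomial.IsHomogeneous.sum _ _ _
            fun g _ => (hThhom g v).C_mul _)
        have hZ' : ∀ v ∈ insert b Z, h' v = 0 := by
          intro v hv
          rcases Finset.mem_insert.mp hv with rfl | hvZ
          · rw [hval', ← hd, sub_self]
          · have hvb : v ≠ b := fun hvb => hbZ (hvb ▸ hvZ)
            rw [hval', hZ v hvZ]
            have hTh0 : ∀ g ∈ F, Th g v = 0 := by
              intro g hg
              rw [hF, Finset.mem_filter] at hg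
              obtain ⟨hgA, hgZ⟩ := hg
              apply hThsupp
              · intro hveq
                rcases hfact g hgA with ⟨h1, _⟩ | ⟨_, _, h2⟩
                · exact hvb (by rw [hveq, h1])
                · exact hgZ (by rw [h2, ← hveq]; exact hvZ)
              · intro hveq
                rcases hfact g hgA with ⟨_, h2⟩ | ⟨h1, _, _⟩
                · exact hgZ (by rw [h2, ← hveq]; exact hvZ)
                · exact hvb (by rw [hveq, h1])
            rw [Finset.sum_congr rfl (fun g hg => by rw [hTh0 g hg, mul_zero]),
              Finset.sum_const_zero, sub_zero]
        have hcompl : (insert b Z)ᶜ.card ≤ n := by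
          rw [Finset.compl_insert, Finset.card_erase_of_mem (Finset.mem_compl.mpr hbZ)]
          have h1 : 1 ≤ Zᶜ.card := Finset.card_pos.mpr ⟨u, hu⟩
          omega
        have hspan' := ih (insert b Z) h' hcompl ⟨b, Finset.mem_insert_self b Z⟩
          hmem' hhom' hZ'
        have hsum : h = h' + ∑ g ∈ F, d g • Th g := by rw [hh']; ring
        rw [hsum]
        exact Submodule.add_mem _ hspan'
          (Submodule.sum_mem _ fun g _ =>
            Submodule.smul_mem _ _ (Submodule.subset_span ⟨g, rfl⟩))
  rcases isEmpty_or_nonempty V with hV | hV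
  · have h0 : f = 0 := funext fun v => (hV.false v).elim
    rw [h0]; exact Submodule.zero_mem _
  · obtain ⟨v0⟩ := hV
    have hgmem : (fun _ => f v0 : V → MvPolynomial (Fin 2) ℚ) ∈
        Submodule.span ℚ (Set.range Th ∪
          {g : V → MvPolynomial (Fin 2) ℚ |
            ∃ p : MvPolynomial (Fin 2) ℚ, p.IsHomogeneous 2 ∧ g = fun _ => p}) :=
      Submodule.subset_span (Or.inr ⟨f v0, hfhom v0, rfl⟩)
    have hmem2 : (f - (fun _ => f v0) : V → MvPolynomial (Fin 2) ℚ) ∈ gkmCohom5 src tgt w := by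
      apply Submodule.sub_mem _ hf
      intro e
      simp
    have hhom2 : ∀ u, ((f - (fun _ => f v0) : V → MvPolynomial (Fin 2) ℚ) u).IsHomogeneous 2 :=
      fun u => (hfhom u).sub (hfhom v0)
    have hz2 : ∀ v ∈ ({v0} : Finset V), (f - (fun _ => f v0) : V → MvPolynomial (Fin 2) ℚ) v = 0 := by
      intro v hv
      rw [Finset.mem_singleton] at hv
      subst hv
      simp
    have hspan := main (({v0} : Finset V)ᶜ.card) {v0} (f - (fun _ => f v0) : V → MvPolynomial (Fin 2) ℚ) le_rfl
      ⟨v0, Finset.mem_singleton_self v0⟩ hmem2 hhom2 hz2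
    have hsum : f = (f - (fun _ => f v0) : V → MvPolynomial (Fin 2) ℚ) + fun _ => f v0 := by ring
    rw [hsum]
    exact Submodule.add_mem _
      (Submodule.span_mono Set.subset_union_left hspan) hgmem

end
end

section
/- Let (Γ,α) be an abstract GKM graph with a chosen lift of the axial function and a compatible connection. For an edge e₁ at a vertex with adjacent edges e₁,…,e_n, write α(∇_{e₁}(e_i)) = ε_i α(e_i) + k_i α(e₁) (ε₁ = 1, k₁ = 0) and set η(e₁) = −ε₂⋯ε_n. If some choice of signs of the weights satisfies ∏_{i=1}^{m} η(e_i) = 1 for every closed edge path e_1,…,e_m, then every choice of signs does. (I.e., orientability of a GKM graph is independent of the chosen lift of α.) -/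
open Finset

private lemma usq (u : ℤˣ) : u * u = 1 := Int.units_mul_self u

private lemma usq' (u b : ℤˣ) : u * (u * b) = b := by
  rw [← mul_assoc, usq, one_mul]

/-- Orientability of an abstract GKM graph is independent of the chosen
lift of the axial function.  Setup: `(Γ,α)` is an abstract GKM graph with base lift
`α : E(Γ) → ℤᵏ` and compatible connection `∇ = nab`; a sign choice is `s : E → ℤˣ`, the
corresponding lift of the axial function being `e ↦ s(e)•α(e)`.  For an edge `e` from `v`
to `w` the connection relations `s(∇g)•α(∇g) = ε_g·(s(g)•α(g)) + k_g·(s(e)•α(e))` define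
signs `ε_g`, and `η(e) = -∏_{g ∈ E(Γ)_v \ {e}} ε_g`; `η` depends on the sign choice `s`.
Claim: if for some sign choice `s₀` the product of `η` over every closed edge path equals
`1`, then the same holds for every sign choice `s`. -/
theorem stmt7 {V E : Type} [Fintype E] [DecidableEq E] {k : ℕ}
    (inc : E → V → Prop) [∀ e v, Decidable (inc e v)]
    (α : E → Fin k → ℤ)
    (nab : ∀ (e : E) (v w : V), inc e v → inc e w → v ≠ w →
      ({f // inc f v} ≃ {f // inc f w}))
    (hfix : ∀ (e : E) (v w : V) (hv : inc e v) (hw : inc e w) (hvw : v ≠ w),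
      nab e v w hv hw hvw ⟨e, hv⟩ = ⟨e, hw⟩)
    (hsymm : ∀ (e : E) (v w : V) (hv : inc e v) (hw : inc e w) (hvw : v ≠ w),
      nab e w v hw hv hvw.symm = (nab e v w hv hw hvw).symm)
    -- compatibility of the connection with the (base lift of the) axial function
    (hcompat : ∀ (e : E) (v w : V) (hv : inc e v) (hw : inc e w) (hvw : v ≠ w),
      ∃ (eps : {f // inc f v} → ℤˣ) (kk : {f // inc f v} → ℤ),
        ∀ g : {f // inc f v},
          α (↑(nab e v w hv hw hvw g) : E) = (eps g : ℤ) • α (↑g : E) + kk g • α e)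
    -- `η`, as a function of the sign choice, characterized by the connection relations
    (η : (E → ℤˣ) → E → ℤˣ)
    (hη : ∀ (s : E → ℤˣ) (e : E) (v w : V) (hv : inc e v) (hw : inc e w) (hvw : v ≠ w)
        (eps : {f // inc f v} → ℤˣ) (kk : {f // inc f v} → ℤ),
        (∀ g : {f // inc f v},
          (s (↑(nab e v w hv hw hvw g) : E) : ℤ) • α (↑(nab e v w hv hw hvw g) : E) =
            (eps g : ℤ) • ((s (↑g : E) : ℤ) • α (↑g : E)) +
              kk g • ((s e : ℤ) • α e)) →
        η s e = - ∏ g ∈ Finset.univ.erase (⟨e, hv⟩ : {f // inc f v}), eps g)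
    -- some sign choice satisfies the orientability condition …
    (s₀ : E → ℤˣ)
    (h₀ : ∀ (m : ℕ) (es : Fin (m+1) → E) (vs : Fin (m+1) → V),
      (∀ i, inc (es i) (vs i) ∧ inc (es i) (vs (i+1)) ∧ vs i ≠ vs (i+1)) →
      ∏ i, η s₀ (es i) = 1) :
    -- … then every sign choice does
    ∀ s : E → ℤˣ, ∀ (m : ℕ) (es : Fin (m+1) → E) (vs : Fin (m+1) → V),
      (∀ i, inc (es i) (vs i) ∧ inc (es i) (vs (i+1)) ∧ vs i ≠ vs (i+1)) →
      ∏ i, η s (es i) = 1 := by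
  intro s m es vs hpath
  classical
  -- `G v` records the "discrepancy" of the two sign choices at a vertex `v`.
  set G : V → ℤˣ := fun v => ∏ g : {f // inc f v}, (s ↑g * s₀ ↑g) with hG
  -- Key pointwise comparison of `η s` and `η s₀`.
  have key : ∀ (e : E) (v w : V) (hv : inc e v) (hw : inc e w) (hvw : v ≠ w),
      η s e = η s₀ e * (G v * G w) := by
    intro e v w hv hw hvw
    obtain ⟨eps, kk, heq⟩ := hcompat e v w hv hw hvw
    set ν := nab e v w hv hw hvw with hν
    -- for any sign choice `u`, the twisted `eps`/`kk` satisfy the connection relation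
    have hrel : ∀ (u : E → ℤˣ) (g : {f // inc f v}),
        (u (↑(ν g)) : ℤ) • α (↑(ν g)) =
          ((u (↑(ν g)) * eps g * u (↑g) : ℤˣ) : ℤ) • ((u (↑g) : ℤ) • α (↑g)) +
            ((u (↑(ν g)) : ℤ) * kk g * (u e : ℤ)) • ((u e : ℤ) • α e) := by
      intro u g
      funext x
      have h1 := congrFun (heq g) x
      have hg : (u (↑g) : ℤ) * (u (↑g) : ℤ) = 1 := by
        rw [← Units.val_mul, usq, Units.val_one]
      have he : (u e : ℤ) * (u e : ℤ) = 1 := by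
        rw [← Units.val_mul, usq, Units.val_one]
      simp only [Pi.smul_apply, Pi.add_apply, smul_eq_mul, Units.val_mul] at h1 ⊢
      rw [h1]
      linear_combination (-((u (↑(ν g)) : ℤ) * (eps g : ℤ) * α (↑g) x)) * hg +
        (-((u (↑(ν g)) : ℤ) * kk g * α e x)) * he
    -- compute `η u e` for a sign choice `u`
    have hval : ∀ (u : E → ℤˣ),
        η u e = -((∏ h : {f // inc f w}, u ↑h) *
          (∏ g ∈ Finset.univ.erase (⟨e, hv⟩ : {f // inc f v}), eps g) *
          (∏ g : {f // inc f v}, u ↑g)) := by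
      intro u
      have h1 := hη u e v w hv hw hvw
        (fun g => u (↑(ν g)) * eps g * u (↑g))
        (fun g => (u (↑(ν g)) : ℤ) * kk g * (u e : ℤ)) (hrel u)
      rw [h1]
      congr 1
      rw [Finset.prod_mul_distrib, Finset.prod_mul_distrib]
      -- erased products in terms of full products
      have herase : ∀ (f : {f // inc f v} → ℤˣ),
          ∏ g ∈ Finset.univ.erase (⟨e, hv⟩ : {f // inc f v}), f g
            = (f ⟨e, hv⟩)⁻¹ * ∏ g : {f // inc f v}, f g := by
        intro f
        rw [eq_inv_mul_iff_mul_eq]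
        exact Finset.mul_prod_erase _ _ (Finset.mem_univ _)
      rw [herase (fun g => u ↑(ν g)), herase (fun g => u ↑g)]
      have hcomp : ∏ g : {f // inc f v}, u ↑(ν g) = ∏ h : {f // inc f w}, u ↑h :=
        Equiv.prod_comp ν (fun h => u ↑h)
      have hfix' : (↑(ν ⟨e, hv⟩) : E) = e := by rw [hν, hfix]
      have hinv : ∀ z : ℤˣ, z⁻¹ = z := fun z => inv_eq_of_mul_eq_one_right (usq z)
      rw [hcomp, hfix', hinv]
      simp only [mul_comm, mul_left_comm, mul_assoc, usq, usq', one_mul, mul_one]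
    rw [hval s, hval s₀, hG]
    simp only [Finset.prod_mul_distrib, neg_mul, mul_neg, neg_neg]
    congr 1
    simp only [mul_comm, mul_left_comm, mul_assoc, usq, usq', one_mul, mul_one]
  -- now multiply over the closed path
  have hstep : ∀ i : Fin (m+1), η s (es i) = η s₀ (es i) * (G (vs i) * G (vs (i+1))) :=
    fun i => key (es i) (vs i) (vs (i+1)) (hpath i).1 (hpath i).2.1 (hpath i).2.2
  calc ∏ i, η s (es i)
      = ∏ i, (η s₀ (es i) * (G (vs i) * G (vs (i+1)))) := by
        exact Finset.prod_congr rfl (fun i _ => hstep i)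
    _ = (∏ i, η s₀ (es i)) * ((∏ i, G (vs i)) * (∏ i, G (vs (i+1)))) := by
        rw [Finset.prod_mul_distrib, Finset.prod_mul_distrib]
    _ = 1 := by
        rw [h₀ m es vs hpath, one_mul]
        have hcyc : ∏ i, G (vs (i+1)) = ∏ i, G (vs i) :=
          Fintype.prod_equiv (Equiv.addRight (1 : Fin (m+1))) _ _ (fun i => rfl)
        rw [hcyc, ← Finset.prod_mul_distrib]
        simp [usq]
end

section
/- Let T = (S^1)^2 and R = H*(BT;ℤ) ≅ ℤ[x₁,x₂] with R² its degree-2 part ≅ ℤ². For every subgroup C ⊂ R² of finite index there is a unique finite subgroup U ⊂ T with C = ker(R² → H²(BU;ℤ)). Moreover, if U' ⊂ T is any closed subgroup with ker(R² → H²(BU')) ⊂ C, then U ⊂ U'. -/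
open AddSubgroup

local notation "𝕋" => AddCircle (1 : ℝ)

theorem Real.fact_zero_lt_one : Fact ((0 : ℝ) < 1) := ⟨one_pos⟩

attribute [local instance] Real.fact_zero_lt_one

namespace Stmt12Aux

lemma intCoe_zero (m : ℤ) : ((m : ℝ) : 𝕋) = 0 := by
  rw [AddCircle.coe_eq_zero_iff]; exact ⟨m, by simp⟩

lemma zsmul_coe (k : ℤ) (t : ℝ) : k • ((t : ℝ) : 𝕋) = (((k : ℝ) * t : ℝ) : 𝕋) := by
  rw [← AddCircle.coe_zsmul, zsmul_eq_mul]

lemma tors_iff (k : ℤ) (t : ℝ) :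
    k • ((t : ℝ) : 𝕋) = 0 ↔ ∃ m : ℤ, (m : ℝ) = (k : ℝ) * t := by
  rw [zsmul_coe, AddCircle.coe_eq_zero_iff]
  constructor
  · rintro ⟨m, hm⟩; exact ⟨m, by simpa using hm⟩
  · rintro ⟨m, hm⟩; exact ⟨m, by simpa using hm⟩

lemma coe_surj : Function.Surjective ((↑) : ℝ → 𝕋) :=
  QuotientAddGroup.mk'_surjective _

lemma tors_mem {k : ℤ} (hk : k ≠ 0) {x : 𝕋} (hx : k • x = 0) :
    ∃ i : ℤ, x = i • ((((k : ℝ)⁻¹ : ℝ)) : 𝕋) := by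
  obtain ⟨t, rfl⟩ := coe_surj x
  obtain ⟨m, hm⟩ := (tors_iff k t).mp hx
  have hk' : (k : ℝ) ≠ 0 := by exact_mod_cast hk
  have ht : t = (m : ℝ) * (k : ℝ)⁻¹ := by field_simp; linarith [hm]
  exact ⟨m, by rw [ht, ← zsmul_coe m ((k : ℝ)⁻¹)]⟩

lemma norm1 (t : ℝ) : ‖((t : ℝ) : 𝕋)‖ = |t - round t| := by
  have := AddCircle.norm_eq (p := (1 : ℝ)) (x := t)
  simpa using this

lemma norm_small {t : ℝ} (h : |t| < 2⁻¹) : ‖((t : ℝ) : 𝕋)‖ = |t| := by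
  rw [norm1]
  obtain ⟨h1, h2⟩ := abs_lt.mp h
  have : round t = 0 := round_eq_zero_iff.mpr ⟨by linarith, by linarith⟩
  simp [this]

lemma oneD (B : AddSubgroup 𝕋) (hB : IsClosed (B : Set 𝕋)) :
    B = ⊤ ∨ ∃ k : ℤ, k ≠ 0 ∧ B = zmultiples ((((k : ℝ)⁻¹ : ℝ)) : 𝕋) ∧
      ∀ x : 𝕋, x ∈ B ↔ k • x = 0 := by
  classical
  set f : ℝ →+ 𝕋 := QuotientAddGroup.mk' (zmultiples (1 : ℝ)) with hf
  have hfs : Function.Surjective f := QuotientAddGroup.mk'_surjective _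
  have hfc : Continuous f := AddCircle.continuous_mk' 1
  set S : AddSubgroup ℝ := comap f B with hS
  have hmapS : map f S = B := map_comap_eq_self_of_surjective hfs B
  rcases S.dense_or_cyclic with hSd | ⟨a, ha⟩
  · left
    have hSc : IsClosed (S : Set ℝ) := hB.preimage hfc
    have huniv : (S : Set ℝ) = Set.univ := by
      rw [← hSc.closure_eq]; exact hSd.closure_eq
    have hStop : S = ⊤ := SetLike.ext' (by rw [huniv]; rfl)
    rw [hStop] at hmapS
    rw [← hmapS]
    exact (map_top_of_surjective f hfs).symm ▸ rfl
  · right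
    rw [← zmultiples_eq_closure] at ha
    have h1 : (1 : ℝ) ∈ S := by
      have : f (1 : ℝ) = 0 := AddCircle.coe_period 1
      simpa [hS, mem_comap, this] using B.zero_mem
    rw [ha] at h1
    obtain ⟨k, hk⟩ := mem_zmultiples_iff.mp h1
    have hk' : (k : ℝ) * a = 1 := by rw [← hk]; rw [zsmul_eq_mul]
    have hk0 : k ≠ 0 := by rintro rfl; norm_num at hk'
    have hak : a = (k : ℝ)⁻¹ := by
      field_simp at hk' ⊢
      linarith [hk']
    have hBz : B = zmultiples ((((k : ℝ)⁻¹ : ℝ)) : 𝕋) := by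
      rw [← hmapS, ha, AddMonoidHom.map_zmultiples, hak]; rfl
    refine ⟨k, hk0, hBz, fun x => ?_⟩
    constructor
    · intro hx
      rw [hBz] at hx
      obtain ⟨i, hi⟩ := mem_zmultiples_iff.mp hx
      rw [← hi, smul_comm, zsmul_coe, mul_inv_cancel₀ (by exact_mod_cast hk0 : (k : ℝ) ≠ 0)]
      rw [show ((1 : ℝ) : 𝕋) = 0 from by simpa using intCoe_zero 1, smul_zero]
    · intro hx
      obtain ⟨t, rfl⟩ := hfs x
      rw [show f t = ((t : ℝ) : 𝕋) from rfl] at hx ⊢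
      obtain ⟨m, hm⟩ := (tors_iff k t).mp hx
      have ht : t = (m : ℝ) * (k : ℝ)⁻¹ := by
        field_simp
        linarith [hm]
      rw [hBz, ht]
      rw [← zsmul_coe m ((k : ℝ)⁻¹)]
      exact zsmul_mem (mem_zmultiples _) m

def torsS : Set 𝕋 := {x | ∃ n : ℤ, n ≠ 0 ∧ n • x = 0}

lemma dense_tors : Dense torsS := by
  have h1 : DenseRange ((↑) : ℚ → ℝ) := Rat.denseRange_cast
  have h2 : DenseRange ((↑) : ℝ → 𝕋) := coe_surj.denseRange
  have h3 : DenseRange (((↑) : ℝ → 𝕋) ∘ ((↑) : ℚ → ℝ)) :=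
    h2.comp h1 (AddCircle.continuous_mk' 1)
  refine Dense.mono ?_ h3
  rintro x ⟨r, rfl⟩
  refine ⟨(r.den : ℤ), by exact_mod_cast r.den_pos.ne', ?_⟩
  show (r.den : ℤ) • (((r : ℝ) : ℝ) : 𝕋) = 0
  rw [tors_iff]
  refine ⟨r.num, ?_⟩
  have hden : ((r.den : ℚ)) ≠ 0 := by exact_mod_cast r.den_pos.ne'
  have hdenR : ((r.den : ℝ)) ≠ 0 := by exact_mod_cast r.den_pos.ne'
  push_cast
  rw [Rat.cast_def]
  field_simp


lemma DL (α : ℝ) (J : ℕ) (hJ : 1 ≤ J)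
    (h : ∀ j : ℕ, 1 ≤ j → j ≤ J → ‖(((j : ℝ) * α : ℝ) : 𝕋)‖ < 4⁻¹) :
    |α - round α| < (2 * (J : ℝ))⁻¹ := by
  set β := α - (round α : ℝ) with hβ
  have claim : ∀ t : ℕ, 2 ^ t ≤ J → |β| < 4⁻¹ / 2 ^ t := by
    intro t
    induction t with
    | zero =>
      intro _
      have h1 := h 1 le_rfl hJ
      rw [show ((1 : ℕ) : ℝ) * α = α by norm_num, norm1] at h1
      simpa using h1
    | succ t ih =>
      intro h2
      have h2t : 2 ^ t ≤ J :=
        le_trans (Nat.pow_le_pow_right (by norm_num) (Nat.le_succ t)) h2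
      have hb := ih h2t
      have hj := h (2 ^ (t + 1)) Nat.one_le_two_pow h2
      have hcoe : ((((2 ^ (t + 1) : ℕ) : ℝ) * α : ℝ) : 𝕋)
          = ((((2 ^ (t + 1) : ℕ) : ℝ) * β : ℝ) : 𝕋) := by
        have hsplit : ((2 ^ (t + 1) : ℕ) : ℝ) * α
            = ((2 ^ (t + 1) : ℕ) : ℝ) * β + (((2 ^ (t + 1) * round α : ℤ)) : ℝ) := by
          push_cast [hβ]; ring
        rw [hsplit, AddCircle.coe_add, intCoe_zero, add_zero]
      rw [hcoe] at hj
      have hcast : ((2 ^ (t + 1) : ℕ) : ℝ) = 2 ^ (t + 1) := by push_cast; ring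
      have habs : |((2 ^ (t + 1) : ℕ) : ℝ) * β| < 2⁻¹ := by
        rw [abs_mul, hcast, abs_of_nonneg (by positivity : (0:ℝ) ≤ 2 ^ (t + 1))]
        have hlt : (2 : ℝ) ^ (t + 1) * |β| < 2 ^ (t + 1) * (4⁻¹ / 2 ^ t) :=
          mul_lt_mul_of_pos_left hb (by positivity)
        have : (2 : ℝ) ^ (t + 1) * (4⁻¹ / 2 ^ t) = 2⁻¹ := by
          field_simp
          ring
        linarith [hlt, this.le]
      rw [norm_small habs, abs_mul, hcast,
        abs_of_nonneg (by positivity : (0:ℝ) ≤ 2 ^ (t + 1))] at hj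
      rw [lt_div_iff₀ (by positivity : (0:ℝ) < 2 ^ (t + 1)), mul_comm]
      exact hj
  set t := Nat.log 2 J with ht
  have h1 : 2 ^ t ≤ J := Nat.pow_log_le_self 2 (by omega)
  have h2 : J < 2 ^ (t + 1) := Nat.lt_pow_succ_log_self (by norm_num) J
  have h3 := claim t h1
  have h4 : (4⁻¹ : ℝ) / 2 ^ t = (2 * 2 ^ (t + 1))⁻¹ := by
    field_simp
    ring
  have h5 : ((J : ℝ)) < 2 ^ (t + 1) := by exact_mod_cast h2
  have hJ0 : (0 : ℝ) < J := by exact_mod_cast hJ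
  have h6 : ((2 : ℝ) * 2 ^ (t + 1))⁻¹ < (2 * (J : ℝ))⁻¹ := by
    apply inv_strictAnti₀ (by positivity)
    linarith
  calc |β| < 4⁻¹ / 2 ^ t := h3
    _ = (2 * 2 ^ (t + 1))⁻¹ := h4
    _ < (2 * (J : ℝ))⁻¹ := h6


set_option maxHeartbeats 1000000 in
lemma key (Γ : AddSubgroup (𝕋 × 𝕋)) (hΓ : IsClosed (Γ : Set (𝕋 × 𝕋)))
    (htriv : ∀ y : 𝕋, ((0, y) : 𝕋 × 𝕋) ∈ Γ → y = 0) :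
    ∃ j : ℤ, ∀ p ∈ Γ, p.2 = j • p.1 := by
  classical
  have hcomp : IsCompact (Γ : Set (𝕋 × 𝕋)) := hΓ.isCompact
  set B : AddSubgroup 𝕋 := Γ.map (AddMonoidHom.fst 𝕋 𝕋) with hB
  have hmemB : ∀ x : 𝕋, x ∈ B ↔ ∃ y, (x, y) ∈ Γ := by
    intro x
    constructor
    · rintro ⟨p, hp, rfl⟩
      exact ⟨p.2, hp⟩
    · rintro ⟨y, hy⟩
      exact ⟨(x, y), hy, rfl⟩
  have hBclosed : IsClosed (B : Set 𝕋) := by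
    have : (B : Set 𝕋) = Prod.fst '' (Γ : Set (𝕋 × 𝕋)) := rfl
    rw [this]
    exact (hcomp.image continuous_fst).isClosed
  rcases oneD B hBclosed with hBtop | ⟨k, hk0, hBz, hBt⟩
  swap
  · -- finite (cyclic) first projection
    set g : 𝕋 := ((((k : ℝ)⁻¹ : ℝ)) : 𝕋) with hg
    have hgB : g ∈ B := by rw [hBz]; exact mem_zmultiples _
    obtain ⟨y₀, hy₀⟩ := (hmemB g).mp hgB
    have hkg : k • g = 0 := (hBt g).mp hgB
    have hky₀ : k • y₀ = 0 := by
      have hmem : ((k • g, k • y₀) : 𝕋 × 𝕋) ∈ Γ := by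
        have := Γ.zsmul_mem hy₀ k
        simpa [Prod.smul_mk] using this
      rw [hkg] at hmem
      exact htriv _ hmem
    obtain ⟨i, hi⟩ := tors_mem hk0 hky₀
    refine ⟨i, ?_⟩
    rintro ⟨x, y⟩ hp
    have hxB : x ∈ B := (hmemB x).mpr ⟨y, hp⟩
    rw [hBz] at hxB
    obtain ⟨m, hm⟩ := mem_zmultiples_iff.mp hxB
    have hsub : (((x, y) : 𝕋 × 𝕋) - m • (g, y₀)) ∈ Γ :=
      Γ.sub_mem hp (Γ.zsmul_mem hy₀ m)
    have heq : (((x, y) : 𝕋 × 𝕋) - m • (g, y₀)) = ((0, y - m • y₀) : 𝕋 × 𝕋) := by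
      have : x - m • g = 0 := by rw [hm]; exact sub_self x
      simp [Prod.smul_mk, Prod.ext_iff, this]
      try abel
    rw [heq] at hsub
    have h2 : y = m • y₀ := sub_eq_zero.mp (htriv _ hsub)
    show y = i • x
    rw [h2, hi, ← hm, smul_comm]
  · -- dense first projection
    have hall : ∀ x : 𝕋, ∃ y, (x, y) ∈ Γ := fun x =>
      (hmemB x).mp (hBtop ▸ mem_top x)
    choose φ hφ using hall
    have huniq : ∀ x y, ((x, y) : 𝕋 × 𝕋) ∈ Γ → y = φ x := by
      intro x y h
      have hs : (((x, y) : 𝕋 × 𝕋) - (x, φ x)) ∈ Γ := Γ.sub_mem h (hφ x)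
      have heq : (((x, y) : 𝕋 × 𝕋) - (x, φ x)) = ((0, y - φ x) : 𝕋 × 𝕋) := by
        simp [Prod.ext_iff]
      rw [heq] at hs
      exact sub_eq_zero.mp (htriv _ hs)
    have hφ0 : φ 0 = 0 := by
      refine (huniq 0 0 ?_).symm
      exact Γ.zero_mem
    have hφz : ∀ (i : ℤ) (x : 𝕋), φ (i • x) = i • φ x := by
      intro i x
      refine (huniq _ _ ?_).symm
      have := Γ.zsmul_mem (hφ x) i
      simpa [Prod.smul_mk] using this
    -- continuity at zero
    have hcts : ∃ δ : ℝ, 0 < δ ∧ δ ≤ 4⁻¹ ∧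
        ∀ p : 𝕋 × 𝕋, p ∈ Γ → ‖p.1‖ < δ → ‖p.2‖ < 4⁻¹ := by
      set K : Set (𝕋 × 𝕋) := (Γ : Set (𝕋 × 𝕋)) ∩ {p | 4⁻¹ ≤ ‖p.2‖} with hK
      have hKc : IsClosed K :=
        hΓ.inter (isClosed_le continuous_const (continuous_norm.comp continuous_snd))
      rcases K.eq_empty_or_nonempty with hKe | hKne
      · refine ⟨4⁻¹, by norm_num, le_rfl, fun p hp h1 => ?_⟩
        by_contra h2
        have : p ∈ K := ⟨hp, not_lt.mp h2⟩
        rw [hKe] at this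
        exact this
      · obtain ⟨p₀, hp₀K, hmin⟩ := hKc.isCompact.exists_isMinOn hKne
          ((continuous_norm.comp continuous_fst).continuousOn)
        refine ⟨min ‖p₀.1‖ 4⁻¹, ?_, min_le_right _ _, ?_⟩
        · refine lt_min ?_ (by norm_num)
          obtain ⟨hp₀Γ, hp₀n⟩ := hp₀K
          rcases (norm_nonneg p₀.1).lt_or_eq with hlt | heq0
          · exact hlt
          · exfalso
            have h1 : p₀.1 = 0 := norm_eq_zero.mp heq0.symm
            have h2 : ((0, p₀.2) : 𝕋 × 𝕋) ∈ Γ := by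
              rw [← h1]
              exact hp₀Γ
            have h3 := htriv _ h2
            rw [Set.mem_setOf_eq, h3, norm_zero] at hp₀n
            norm_num at hp₀n
        · intro p hp h1
          by_contra h2
          have hpK : p ∈ K := ⟨hp, not_lt.mp h2⟩
          have h3 : ‖p₀.1‖ ≤ ‖p.1‖ := hmin hpK
          have h4 : ‖p.1‖ < ‖p₀.1‖ := lt_of_lt_of_le h1 (min_le_left _ _)
          linarith
    obtain ⟨δ, hδ0, hδ4, hδ⟩ := hcts
    -- torsion of the values at 1/q
    have hφtor : ∀ q : ℕ, 0 < q → (q : ℤ) • φ ((((q : ℝ)⁻¹ : ℝ)) : 𝕋) = 0 := by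
      intro q hq
      rw [← hφz]
      have h1 : (q : ℤ) • ((((q : ℝ)⁻¹ : ℝ)) : 𝕋) = 0 := by
        rw [zsmul_coe]
        have : ((q : ℤ) : ℝ) * (q : ℝ)⁻¹ = 1 := by
          rw [Int.cast_natCast]
          field_simp
        rw [this]
        simpa using intCoe_zero 1
      rw [h1, hφ0]
    -- main estimate
    have est : ∀ q : ℕ, 4 / δ ≤ (q : ℝ) →
        ∃ r : ℤ, |(r : ℝ)| < 2 / δ ∧
          φ ((((q : ℝ)⁻¹ : ℝ)) : 𝕋) = r • ((((q : ℝ)⁻¹ : ℝ)) : 𝕋) := by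
      intro q hq
      have hq0R : (0 : ℝ) < q := lt_of_lt_of_le (by positivity) hq
      have hq0 : 0 < q := by exact_mod_cast hq0R
      have hδq : 4 ≤ δ * q := by
        rw [div_le_iff₀ hδ0] at hq
        linarith
      obtain ⟨kq, hkq⟩ := tors_mem (k := (q : ℤ)) (by exact_mod_cast hq0.ne') (hφtor q hq0)
      rw [show (((q : ℤ) : ℝ))⁻¹ = ((q : ℝ))⁻¹ by norm_num] at hkq
      set α : ℝ := (kq : ℝ) / q with hα
      set J : ℕ := ⌊δ * q / 2⌋₊ with hJdef
      have hJle : (J : ℝ) ≤ δ * q / 2 := Nat.floor_le (by positivity)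
      have hJ1 : 1 ≤ J := by
        rw [hJdef]
        apply Nat.le_floor
        push_cast
        linarith
      have hJ1R : (1 : ℝ) ≤ J := by exact_mod_cast hJ1
      have hJge : δ * q / 4 ≤ (J : ℝ) := by
        have h1 : δ * q / 2 - 1 < J := Nat.sub_one_lt_floor _
        linarith
      have hπα : ((α : ℝ) : 𝕋) = φ ((((q : ℝ)⁻¹ : ℝ)) : 𝕋) := by
        rw [hkq, zsmul_coe, hα, div_eq_mul_inv]
      have hDLh : ∀ j : ℕ, 1 ≤ j → j ≤ J → ‖(((j : ℝ) * α : ℝ) : 𝕋)‖ < 4⁻¹ := by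
        intro j hj1 hjJ
        have hjR : (1 : ℝ) ≤ j := by exact_mod_cast hj1
        have hjJR : (j : ℝ) ≤ J := by exact_mod_cast hjJ
        have h1 : (((j : ℝ) * α : ℝ) : 𝕋) = φ ((((j : ℝ) * (q : ℝ)⁻¹ : ℝ)) : 𝕋) := by
          have e1 : (((j : ℝ) * α : ℝ) : 𝕋) = (j : ℤ) • ((α : ℝ) : 𝕋) := by
            rw [zsmul_coe]
            norm_num
          have e2 : (((j : ℝ) * (q : ℝ)⁻¹ : ℝ) : 𝕋) = (j : ℤ) • ((((q : ℝ)⁻¹ : ℝ)) : 𝕋) := by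
            rw [zsmul_coe]
            norm_num
          rw [e1, hπα, ← hφz, ← e2]
        have hfrac : |(j : ℝ) * (q : ℝ)⁻¹| < δ := by
          rw [abs_of_nonneg (by positivity), mul_inv_lt_iff₀ hq0R]
          nlinarith [hjJR, hJle, hδ0, hq0R, hδq]
        have hsmall : ‖((((j : ℝ) * (q : ℝ)⁻¹ : ℝ)) : 𝕋)‖ < δ := by
          rw [norm_small (lt_of_lt_of_le hfrac (le_trans hδ4 (by norm_num)))]
          exact hfrac
        have := hδ _ (hφ ((((j : ℝ) * (q : ℝ)⁻¹ : ℝ)) : 𝕋)) hsmall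
        rw [h1]
        exact this
      have hDL := DL α J hJ1 hDLh
      set e : ℤ := round α with he
      refine ⟨kq - e * q, ?_, ?_⟩
      · have h1 : ((kq - e * q : ℤ) : ℝ) = ((α : ℝ) - e) * q := by
          push_cast [hα]
          field_simp
        rw [h1, abs_mul, abs_of_nonneg hq0R.le]
        have h2 : |(α : ℝ) - e| < (2 * (J : ℝ))⁻¹ := hDL
        have h3 : (2 * (J : ℝ))⁻¹ ≤ (2 * (δ * q / 4))⁻¹ := by
          apply inv_anti₀ (by positivity)
          linarith
        have h4 : (2 * (δ * q / 4))⁻¹ = 2 / (δ * q) := by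
          field_simp
          ring
        have h5 : |(α : ℝ) - e| * q < 2 / (δ * q) * q := by
          apply mul_lt_mul_of_pos_right _ hq0R
          calc |(α : ℝ) - e| < (2 * (J : ℝ))⁻¹ := h2
            _ ≤ (2 * (δ * q / 4))⁻¹ := h3
            _ = 2 / (δ * q) := h4
        have h6 : 2 / (δ * q) * q = 2 / δ := by
          field_simp
        linarith
      · rw [hkq]
        have h1 : ((e * q : ℤ)) • ((((q : ℝ)⁻¹ : ℝ)) : 𝕋) = 0 := by
          rw [zsmul_coe]
          have : ((e * q : ℤ) : ℝ) * (q : ℝ)⁻¹ = (e : ℝ) := by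
            push_cast
            field_simp
          rw [this, intCoe_zero]
        rw [sub_smul, h1, sub_zero]
    -- stabilize the slope
    obtain ⟨q₀, hq₀⟩ := exists_nat_gt (max (4 / δ) (2 * (2 / δ)))
    have hq₀4 : 4 / δ ≤ (q₀ : ℝ) := le_of_lt (lt_of_le_of_lt (le_max_left _ _) hq₀)
    have hq₀M : 2 * (2 / δ) < (q₀ : ℝ) := lt_of_le_of_lt (le_max_right _ _) hq₀
    have hq₀0R : (0 : ℝ) < q₀ := lt_of_lt_of_le (by positivity) hq₀4
    have hq₀0 : 0 < q₀ := by exact_mod_cast hq₀0R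
    obtain ⟨j, hjM, hj⟩ := est q₀ hq₀4
    have relst : ∀ s t : ℕ, 0 < s → 0 < t →
        ((((s : ℝ)⁻¹ : ℝ)) : 𝕋) = (t : ℤ) • (((((s * t : ℕ) : ℝ)⁻¹ : ℝ)) : 𝕋) := by
      intro s t hs ht
      rw [zsmul_coe]
      congr 1
      have hsR : ((s : ℝ)) ≠ 0 := by positivity
      have htR : ((t : ℝ)) ≠ 0 := by positivity
      push_cast
      field_simp
    have main : ∀ m : ℕ, 0 < m →
        φ ((((m : ℝ)⁻¹ : ℝ)) : 𝕋) = j • ((((m : ℝ)⁻¹ : ℝ)) : 𝕋) := by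
      intro m hm
      set q' : ℕ := m * q₀ with hq'
      have hq'0 : 0 < q' := Nat.mul_pos hm hq₀0
      have hq'4 : 4 / δ ≤ (q' : ℝ) := by
        refine le_trans hq₀4 ?_
        have h1m : (1 : ℝ) ≤ m := by exact_mod_cast hm
        have h2m := mul_le_mul_of_nonneg_right h1m hq₀0R.le
        rw [one_mul] at h2m
        rw [hq']
        push_cast
        linarith
      obtain ⟨r, hrM, hr⟩ := est q' hq'4
      -- φ at 1/q₀ two ways
      have hrel : ((((q₀ : ℝ)⁻¹ : ℝ)) : 𝕋) = (m : ℤ) • (((((q' : ℕ) : ℝ)⁻¹ : ℝ)) : 𝕋) := by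
        have := relst q₀ m hq₀0 hm
        rw [Nat.mul_comm q₀ m] at this
        exact this
      have hcalc : φ ((((q₀ : ℝ)⁻¹ : ℝ)) : 𝕋) = r • ((((q₀ : ℝ)⁻¹ : ℝ)) : 𝕋) := by
        rw [hrel, hφz, hr, smul_comm]
      have hzero : (j - r) • ((((q₀ : ℝ)⁻¹ : ℝ)) : 𝕋) = 0 := by
        rw [sub_smul, ← hj, ← hcalc, sub_self]
      obtain ⟨i, hi⟩ := (tors_iff (j - r) ((q₀ : ℝ)⁻¹)).mp hzero
      have hieq : (i : ℝ) * q₀ = ((j - r : ℤ) : ℝ) := by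
        have hq₀ne : ((q₀ : ℝ)) ≠ 0 := hq₀0R.ne'
        rw [hi]
        push_cast
        field_simp
      have hjr : |((j - r : ℤ) : ℝ)| < (q₀ : ℝ) := by
        push_cast
        calc |(j : ℝ) - r| ≤ |(j : ℝ)| + |(r : ℝ)| := abs_sub _ _
          _ < 2 / δ + 2 / δ := add_lt_add hjM hrM
          _ = 2 * (2 / δ) := by ring
          _ < q₀ := hq₀M
      have hi0 : i = 0 := by
        by_contra hi0
        have h1 : (1 : ℝ) ≤ |(i : ℝ)| := by
          exact_mod_cast Int.one_le_abs (by exact_mod_cast hi0)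
        have h2 : |((j - r : ℤ) : ℝ)| = |(i : ℝ)| * q₀ := by
          rw [← hieq, abs_mul, abs_of_nonneg hq₀0R.le]
        nlinarith
      have hjreq : j = r := by
        have : ((j - r : ℤ) : ℝ) = 0 := by
          rw [← hieq, hi0]
          norm_num
        have : (j - r : ℤ) = 0 := by exact_mod_cast this
        omega
      -- now compute φ at 1/m
      have hrel2 : ((((m : ℝ)⁻¹ : ℝ)) : 𝕋) = (q₀ : ℤ) • (((((q' : ℕ) : ℝ)⁻¹ : ℝ)) : 𝕋) :=
        relst m q₀ hm hq₀0
      rw [hrel2, hφz, hr, hjreq, smul_comm]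
    -- torsion points have slope j
    have tor_eq : ∀ x ∈ torsS, φ x = j • x := by
      rintro x ⟨n, hn0, hnx⟩
      have hm0 : 0 < n.natAbs := Int.natAbs_pos.mpr hn0
      have hmain := main n.natAbs hm0
      have hnx' : ((n.natAbs : ℤ)) • x = 0 := by
        rcases Int.natAbs_eq n with hcase | hcase
        · rw [← hcase]
          exact hnx
        · have h1 : ((n.natAbs : ℤ)) = -n := by omega
          rw [h1, neg_smul, hnx, neg_zero]
      obtain ⟨i, hi⟩ := tors_mem (k := ((n.natAbs : ℤ)))
        (by exact_mod_cast hm0.ne') hnx'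
      rw [show ((((n.natAbs : ℤ)) : ℝ))⁻¹ = ((n.natAbs : ℝ))⁻¹ by push_cast [Nat.cast_natAbs]; ring] at hi
      rw [hi, hφz, hmain, smul_comm]
    -- closure argument
    have hψc : Continuous (fun p : 𝕋 × 𝕋 => (p.1, p.2 - j • p.1)) :=
      continuous_fst.prodMk (continuous_snd.sub ((continuous_zsmul j).comp continuous_fst))
    set ψ : 𝕋 × 𝕋 →+ 𝕋 × 𝕋 :=
      { toFun := fun p => (p.1, p.2 - j • p.1)
        map_zero' := by simp
        map_add' := by
          intro p q'
          simp [Prod.ext_iff]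
          abel } with hψ
    set Δ : AddSubgroup (𝕋 × 𝕋) := Γ.map ψ with hΔ
    have hΔset : (Δ : Set (𝕋 × 𝕋)) = (fun p : 𝕋 × 𝕋 => (p.1, p.2 - j • p.1)) '' Γ := rfl
    have hΔclosed : IsClosed (Δ : Set (𝕋 × 𝕋)) := by
      rw [hΔset]
      exact (hcomp.image hψc).isClosed
    have hDtor : ∀ x ∈ torsS, ((x, 0) : 𝕋 × 𝕋) ∈ Δ := by
      intro x hx
      refine ⟨(x, φ x), hφ x, ?_⟩
      show ((x, φ x - j • x) : 𝕋 × 𝕋) = (x, 0)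
      rw [tor_eq x hx, sub_self]
    have hDall : ∀ x : 𝕋, ((x, 0) : 𝕋 × 𝕋) ∈ Δ := by
      have hDc : IsClosed {x : 𝕋 | ((x, 0) : 𝕋 × 𝕋) ∈ Δ} :=
        hΔclosed.preimage (continuous_id.prodMk continuous_const)
      have hdense : Dense {x : 𝕋 | ((x, 0) : 𝕋 × 𝕋) ∈ Δ} := Dense.mono hDtor dense_tors
      have huniv : {x : 𝕋 | ((x, 0) : 𝕋 × 𝕋) ∈ Δ} = Set.univ := by
        rw [← hDc.closure_eq]
        exact hdense.closure_eq
      intro x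
      have hx : x ∈ {x : 𝕋 | ((x, 0) : 𝕋 × 𝕋) ∈ Δ} := by
        rw [huniv]
        trivial
      exact hx
    refine ⟨j, ?_⟩
    rintro ⟨x, y⟩ hp
    have h1 : ((x, y - j • x) : 𝕋 × 𝕋) ∈ Δ := ⟨(x, y), hp, rfl⟩
    have h3 : ((0, y - j • x) : 𝕋 × 𝕋) ∈ Δ := by
      have := Δ.sub_mem h1 (hDall x)
      simpa [Prod.ext_iff] using this
    obtain ⟨w, hw, hweq⟩ := h3
    have hw1 : w.1 = 0 := congrArg Prod.fst hweq
    have hw2 : w.2 - j • w.1 = y - j • x := congrArg Prod.snd hweq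
    have hwΓ : ((0, w.2) : 𝕋 × 𝕋) ∈ Γ := by
      rw [← hw1]
      exact hw
    have hw20 : w.2 = 0 := htriv _ hwΓ
    have : y - j • x = 0 := by
      rw [← hw2, hw20, hw1]
      simp
    show y = j • x
    have := sub_eq_zero.mp this
    exact this


noncomputable def ratToReal : AddCircle (1 : ℚ) →+ 𝕋 :=
  QuotientAddGroup.lift _
    ((QuotientAddGroup.mk' (zmultiples (1 : ℝ))).comp (Rat.castHom ℝ).toAddMonoidHom)
    (by
      intro x hx
      obtain ⟨m, hm⟩ := mem_zmultiples_iff.mp hx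
      have : x = (m : ℚ) := by rw [← hm]; simp
      subst this
      show (((m : ℚ) : ℝ) : 𝕋) = 0
      rw [show (((m : ℚ) : ℝ)) = ((m : ℝ)) by push_cast; ring]
      exact intCoe_zero m)

lemma ratToReal_coe (q : ℚ) : ratToReal ((q : AddCircle (1 : ℚ))) = ((q : ℝ) : 𝕋) := rfl

lemma ratToReal_ne_zero {x : AddCircle (1 : ℚ)} (hx : x ≠ 0) : ratToReal x ≠ 0 := by
  obtain ⟨q, rfl⟩ : ∃ q : ℚ, (q : AddCircle (1 : ℚ)) = x :=
    QuotientAddGroup.mk'_surjective _ x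
  rw [ratToReal_coe]
  intro h0
  apply hx
  rw [AddCircle.coe_eq_zero_iff] at h0 ⊢
  obtain ⟨m, hm⟩ := h0
  refine ⟨m, ?_⟩
  have : ((m : ℝ)) = ((q : ℝ)) := by rw [← hm]; simp
  have hq : (m : ℚ) = q := by exact_mod_cast this
  rw [← hq]
  simp

end Stmt12Aux

open Stmt12Aux

set_option maxHeartbeats 1000000 in
/-- Let `T = (S¹)²` (here `AddCircle 1 × AddCircle 1`) and identify
`R² = H²(BT;ℤ) ≅ ℤ²`, the restriction map `H²(BT;ℤ) → H²(BU;ℤ)` for a closed subgroup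
`U ⊆ T` corresponding to restriction of characters: `c = (m,n)` restricts trivially to
`U` iff `m•u₁ + n•u₂ = 0` for all `u = (u₁,u₂) ∈ U`.  Then: for every finite-index
subgroup `C ⊆ ℤ²` there is a unique finite subgroup `U ⊆ T` with
`C = ker(R² → H²(BU;ℤ))`; moreover if `U' ⊆ T` is any closed subgroup with
`ker(R² → H²(BU')) ⊆ C`, then `U ⊆ U'`. -/
theorem stmt12 (C : AddSubgroup (ℤ × ℤ)) (hC : C.FiniteIndex) :
    (∃! U : AddSubgroup (AddCircle (1 : ℝ) × AddCircle (1 : ℝ)),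
        (U : Set (AddCircle (1 : ℝ) × AddCircle (1 : ℝ))).Finite ∧
        ∀ c : ℤ × ℤ, c ∈ C ↔
          ∀ u ∈ U, c.1 • u.1 + c.2 • u.2 = (0 : AddCircle (1 : ℝ))) ∧
    (∀ U U' : AddSubgroup (AddCircle (1 : ℝ) × AddCircle (1 : ℝ)),
        (U : Set (AddCircle (1 : ℝ) × AddCircle (1 : ℝ))).Finite →
        (∀ c : ℤ × ℤ, c ∈ C ↔
          ∀ u ∈ U, c.1 • u.1 + c.2 • u.2 = (0 : AddCircle (1 : ℝ))) →
        IsClosed (U' : Set (AddCircle (1 : ℝ) × AddCircle (1 : ℝ))) →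
        (∀ c : ℤ × ℤ,
          (∀ u ∈ U', c.1 • u.1 + c.2 • u.2 = (0 : AddCircle (1 : ℝ))) → c ∈ C) →
        U ≤ U') := by
  classical
  -- Part B (minimality), proved first and reused for uniqueness.
  have partB : ∀ U U' : AddSubgroup (𝕋 × 𝕋),
      (U : Set (𝕋 × 𝕋)).Finite →
      (∀ c : ℤ × ℤ, c ∈ C ↔ ∀ u ∈ U, c.1 • u.1 + c.2 • u.2 = (0 : 𝕋)) →
      IsClosed (U' : Set (𝕋 × 𝕋)) →
      (∀ c : ℤ × ℤ, (∀ u ∈ U', c.1 • u.1 + c.2 • u.2 = (0 : 𝕋)) → c ∈ C) →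
      U ≤ U' := by
    intro U U' hUfin hUbi hU'c hU'ann
    intro u hu
    have hstar : ∀ c : ℤ × ℤ, (∀ v ∈ U', c.1 • v.1 + c.2 • v.2 = (0 : 𝕋)) →
        c.1 • u.1 + c.2 • u.2 = (0 : 𝕋) :=
      fun c hc => (hUbi c).mp (hU'ann c hc) u hu
    have hcomp' : IsCompact (U' : Set (𝕋 × 𝕋)) := hU'c.isCompact
    -- second projection
    set B : AddSubgroup 𝕋 := U'.map (AddMonoidHom.snd 𝕋 𝕋) with hBdef
    have hBclosed : IsClosed (B : Set 𝕋) := by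
      have : (B : Set 𝕋) = Prod.snd '' (U' : Set (𝕋 × 𝕋)) := rfl
      rw [this]
      exact (hcomp'.image continuous_snd).isClosed
    have hu2B : ∃ v, v ∈ U' ∧ v.2 = u.2 := by
      have hu2 : u.2 ∈ B := by
        rcases oneD B hBclosed with hBtop | ⟨k, hk0, hBz, hBt⟩
        · rw [hBtop]; trivial
        · refine (hBt u.2).mpr ?_
          have h1 : ∀ v ∈ U', ((0 : ℤ), k).1 • v.1 + ((0 : ℤ), k).2 • v.2 = (0 : 𝕋) := by
            intro v hv
            have : v.2 ∈ B := ⟨v, hv, rfl⟩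
            have hk2 := (hBt v.2).mp this
            simpa using hk2
          have h2 := hstar ((0 : ℤ), k) h1
          simpa using h2
      obtain ⟨v, hv, hveq⟩ := hu2
      exact ⟨v, hv, hveq⟩
    obtain ⟨v, hv, hveq⟩ := hu2B
    set w : 𝕋 := u.1 - v.1 with hwdef
    have hwstar : ∀ c : ℤ × ℤ, (∀ v' ∈ U', c.1 • v'.1 + c.2 • v'.2 = (0 : 𝕋)) →
        c.1 • w = 0 := by
      intro c hc
      have h1 := hstar c hc
      have h2 := hc v hv
      have : c.1 • w = (c.1 • u.1 + c.2 • u.2) - (c.1 • v.1 + c.2 • v.2) := by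
        rw [hwdef, smul_sub, ← hveq]
        abel
      rw [this, h1, h2, sub_zero]
    -- first-coordinate fiber subgroup
    set A : AddSubgroup 𝕋 := U'.comap (AddMonoidHom.inl 𝕋 𝕋) with hAdef
    have hAmem : ∀ x : 𝕋, x ∈ A ↔ ((x, 0) : 𝕋 × 𝕋) ∈ U' := fun x => Iff.rfl
    have hAclosed : IsClosed (A : Set 𝕋) := by
      have : (A : Set 𝕋) = (fun x : 𝕋 => ((x, 0) : 𝕋 × 𝕋)) ⁻¹' (U' : Set (𝕋 × 𝕋)) := rfl
      rw [this]
      exact hU'c.preimage (continuous_id.prodMk continuous_const)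
    have hwA : w ∈ A := by
      rcases oneD A hAclosed with hAtop | ⟨k', hk'0, hAz, hAt⟩
      · rw [hAtop]; trivial
      · -- use the key lemma to extend the character
        set θ : 𝕋 × 𝕋 →+ 𝕋 × 𝕋 :=
          { toFun := fun p => (p.2, k' • p.1)
            map_zero' := by simp
            map_add' := by
              intro p q
              simp [Prod.ext_iff]
              try abel } with hθdef
        have hθc : Continuous (fun p : 𝕋 × 𝕋 => (p.2, k' • p.1)) :=
          continuous_snd.prodMk ((continuous_zsmul k').comp continuous_fst)
        set Γ : AddSubgroup (𝕋 × 𝕋) := U'.map θ with hΓdef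
        have hΓclosed : IsClosed (Γ : Set (𝕋 × 𝕋)) := by
          have : (Γ : Set (𝕋 × 𝕋)) = (fun p : 𝕋 × 𝕋 => (p.2, k' • p.1)) '' (U' : Set (𝕋 × 𝕋)) := rfl
          rw [this]
          exact (hcomp'.image hθc).isClosed
        have htriv : ∀ y : 𝕋, ((0, y) : 𝕋 × 𝕋) ∈ Γ → y = 0 := by
          intro y hy
          obtain ⟨v', hv', hveq'⟩ := hy
          have hv'1 : v'.2 = 0 := congrArg Prod.fst hveq'
          have hv'2 : k' • v'.1 = y := congrArg Prod.snd hveq'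
          have hv'A : v'.1 ∈ A := by
            rw [hAmem]
            have : ((v'.1, 0) : 𝕋 × 𝕋) = v' := by
              rw [Prod.ext_iff]
              exact ⟨rfl, hv'1.symm⟩
            rw [this]
            exact hv'
          have := (hAt v'.1).mp hv'A
          rw [← hv'2, this]
        obtain ⟨jj, hjj⟩ := key Γ hΓclosed htriv
        have hann : ∀ v' ∈ U', ((k' : ℤ), -jj).1 • v'.1 + ((k' : ℤ), -jj).2 • v'.2 = (0 : 𝕋) := by
          intro v' hv'
          have hmem : θ v' ∈ Γ := ⟨v', hv', rfl⟩
          have := hjj (θ v') hmem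
          have h2 : k' • v'.1 = jj • v'.2 := this
          show k' • v'.1 + (-jj) • v'.2 = 0
          rw [h2, neg_smul]
          abel
        have := hwstar ((k' : ℤ), -jj) hann
        exact (hAt w).mpr this
    have hu_eq : u = v + ((w, 0) : 𝕋 × 𝕋) := by
      rw [Prod.ext_iff]
      constructor
      · show u.1 = v.1 + w
        rw [hwdef]
        abel
      · show u.2 = v.2 + 0
        rw [add_zero, hveq]
    rw [hu_eq]
    exact U'.add_mem hv ((hAmem w).mp hwA)
  -- Part A: existence of U₀.
  set U₀ : AddSubgroup (𝕋 × 𝕋) :=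
    { carrier := {u : 𝕋 × 𝕋 | ∀ c ∈ C, c.1 • u.1 + c.2 • u.2 = (0 : 𝕋)}
      zero_mem' := by intro c _; simp
      add_mem' := by
        intro a b ha hb c hc
        have h1 := ha c hc
        have h2 := hb c hc
        show c.1 • (a.1 + b.1) + c.2 • (a.2 + b.2) = 0
        rw [smul_add, smul_add]
        calc c.1 • a.1 + c.1 • b.1 + (c.2 • a.2 + c.2 • b.2)
            = (c.1 • a.1 + c.2 • a.2) + (c.1 • b.1 + c.2 • b.2) := by abel
          _ = 0 := by rw [h1, h2, add_zero]
      neg_mem' := by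
        intro a ha c hc
        have h1 := ha c hc
        show c.1 • (-a.1) + c.2 • (-a.2) = 0
        rw [smul_neg, smul_neg, ← neg_add, h1, neg_zero] } with hU₀def
  have hU₀mem : ∀ x : 𝕋 × 𝕋, x ∈ U₀ ↔ ∀ c ∈ C, c.1 • x.1 + c.2 • x.2 = (0 : 𝕋) :=
    fun _ => Iff.rfl
  -- finiteness
  set n : ℕ := C.index with hndef
  have hn0 : n ≠ 0 := hC.index_ne_zero
  have hfinU₀ : (U₀ : Set (𝕋 × 𝕋)).Finite := by
    set S : Set 𝕋 := {x : 𝕋 | (n : ℤ) • x = 0} with hSdef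
    have hSfin : S.Finite := by
      have hsub : S ⊆ Set.range (fun m : Fin n => ((m : ℕ) : ℤ) • ((((n : ℝ)⁻¹ : ℝ)) : 𝕋)) := by
        intro x hx
        obtain ⟨i, hi⟩ := tors_mem (k := (n : ℤ)) (by exact_mod_cast hn0) hx
        rw [show (((((n : ℤ)) : ℝ))⁻¹) = ((n : ℝ))⁻¹ by push_cast; ring] at hi
        have hng : ((n : ℤ)) • ((((n : ℝ)⁻¹ : ℝ)) : 𝕋) = 0 := by
          rw [zsmul_coe]
          rw [show (((n : ℤ) : ℝ)) * ((n : ℝ))⁻¹ = 1 by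
            rw [Int.cast_natCast]
            field_simp
            ]
          simpa using intCoe_zero 1
        set g : 𝕋 := ((((n : ℝ)⁻¹ : ℝ)) : 𝕋) with hgdef
        have hn0' : (0 : ℤ) < (n : ℤ) := by
          exact_mod_cast Nat.pos_of_ne_zero hn0
        have h3 : ((i % (n : ℤ)).toNat : ℤ) = i % (n : ℤ) :=
          Int.toNat_of_nonneg (Int.emod_nonneg i hn0'.ne')
        have hmod : x = ((i % (n : ℤ)).toNat : ℤ) • g := by
          have h1 : i • g = ((n : ℤ) * (i / (n : ℤ))) • g + (i % (n : ℤ)) • g := by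
            rw [← add_smul, Int.mul_ediv_add_emod]
          have h2 : ((n : ℤ) * (i / (n : ℤ))) • g = 0 := by
            rw [mul_comm, mul_smul, hng, smul_zero]
          rw [hi, h1, h2, zero_add, h3]
        have hlt : (i % (n : ℤ)).toNat < n := by
          have := Int.emod_lt_of_pos i hn0'
          omega
        exact ⟨⟨(i % (n : ℤ)).toNat, hlt⟩, hmod.symm⟩
      exact Set.Finite.subset (Set.finite_range _) hsub
    have hsub2 : (U₀ : Set (𝕋 × 𝕋)) ⊆ S ×ˢ S := by
      intro x hx
      have h1 := hx ((n : ℤ), (0 : ℤ)) ?mem1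
      case mem1 =>
        have := C.nsmul_index_mem ((1 : ℤ), (0 : ℤ))
        simpa [Prod.ext_iff] using this
      have h2 := hx ((0 : ℤ), (n : ℤ)) ?mem2
      case mem2 =>
        have := C.nsmul_index_mem ((0 : ℤ), (1 : ℤ))
        simpa [Prod.ext_iff] using this
      constructor
      · show (n : ℤ) • x.1 = 0
        simpa using h1
      · show (n : ℤ) • x.2 = 0
        simpa using h2
    exact Set.Finite.subset (hSfin.prod hSfin) hsub2
  -- the biconditional
  have hbicond : ∀ c : ℤ × ℤ, c ∈ C ↔ ∀ u ∈ U₀, c.1 • u.1 + c.2 • u.2 = (0 : 𝕋) := by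
    intro c
    constructor
    · intro hc u hu
      exact hu c hc
    · intro h
      by_contra hcC
      have hcQ : (QuotientAddGroup.mk c : (ℤ × ℤ) ⧸ C) ≠ 0 := by
        simpa [QuotientAddGroup.eq_zero_iff] using hcC
      obtain ⟨χ, hχ⟩ := CharacterModule.exists_character_apply_ne_zero_of_ne_zero hcQ
      set F : ℤ × ℤ → 𝕋 := fun c' => ratToReal (χ (QuotientAddGroup.mk c')) with hFdef
      have hFzsmul : ∀ (i : ℤ) (x : ℤ × ℤ), F (i • x) = i • F x := by
        intro i x
        rw [hFdef]
        simp only []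
        rw [show (QuotientAddGroup.mk (i • x) : (ℤ × ℤ) ⧸ C) = i • QuotientAddGroup.mk x from rfl]
        rw [map_zsmul χ, map_zsmul]
      have hFadd : ∀ x y : ℤ × ℤ, F (x + y) = F x + F y := by
        intro x y
        rw [hFdef]
        simp only []
        rw [show (QuotientAddGroup.mk (x + y) : (ℤ × ℤ) ⧸ C) = QuotientAddGroup.mk x + QuotientAddGroup.mk y from rfl]
        rw [map_add χ, map_add]
      set uu : 𝕋 × 𝕋 := (F ((1 : ℤ), (0 : ℤ)), F ((0 : ℤ), (1 : ℤ))) with huudef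
      have hdecomp : ∀ c' : ℤ × ℤ, c'.1 • uu.1 + c'.2 • uu.2 = F c' := by
        intro c'
        have h1 : c' = c'.1 • ((1 : ℤ), (0 : ℤ)) + c'.2 • ((0 : ℤ), (1 : ℤ)) := by
          rw [Prod.ext_iff]
          constructor <;> simp
        calc c'.1 • uu.1 + c'.2 • uu.2
            = F (c'.1 • ((1 : ℤ), (0 : ℤ))) + F (c'.2 • ((0 : ℤ), (1 : ℤ))) := by
              rw [hFzsmul, hFzsmul]
          _ = F (c'.1 • ((1 : ℤ), (0 : ℤ)) + c'.2 • ((0 : ℤ), (1 : ℤ))) := (hFadd _ _).symm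
          _ = F c' := by rw [← h1]
      have huuU₀ : uu ∈ U₀ := by
        rw [hU₀mem]
        intro c' hc'
        rw [hdecomp c']
        rw [hFdef]
        simp only []
        rw [show (QuotientAddGroup.mk c' : (ℤ × ℤ) ⧸ C) = 0 from
          (QuotientAddGroup.eq_zero_iff c').mpr hc']
        rw [map_zero χ, map_zero]
      have hzero := h uu huuU₀
      rw [hdecomp c] at hzero
      exact ratToReal_ne_zero hχ hzero
  refine ⟨⟨U₀, ⟨hfinU₀, hbicond⟩, ?_⟩, partB⟩
  rintro U₁ ⟨hU₁fin, hU₁bi⟩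
  have hT2 : T2Space (𝕋 × 𝕋) := inferInstance
  apply le_antisymm
  · exact partB U₁ U₀ hU₁fin hU₁bi hfinU₀.isClosed (fun c hc => (hbicond c).mpr hc)
  · exact partB U₀ U₁ hfinU₀ hbicond hU₁fin.isClosed (fun c hc => (hU₁bi c).mpr hc)
end

section
/- Let R = ℤ[x₁,x₂] (graded, x_i in degree 2), let M be a finitely generated graded R-module, and let x ∈ M be a nonzero torsion element of prime order p. Suppose there is an exact sequence 0 → F₁ → F₂ → E → M' → 0 of graded R-modules in which F₁, F₂ are free, E is a direct sum of modules of the form R/(ℓ) for nonzero linear forms ℓ, and M' contains x. Then the radical of the annihilator ideal Ann(x) ⊂ R does not contain the augmentation ideal R^+ = (x₁,x₂); i.e., there exists f ∈ R^+ with f^i · x ≠ 0 for all i ≥ 0. -/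
open MvPolynomial DirectSum

namespace Stmt13Aux

local notation "R2" => MvPolynomial (Fin 2) ℤ


/-- coefficient shift under multiplication by `X i ^ N` -/
lemma coeff_shift (i : Fin 2) (N : ℕ) (f : R2) (m : Fin 2 →₀ ℕ) :
    coeff (Finsupp.single i N + m) (X i ^ N * f) = coeff m f := by
  rw [X_pow_eq_monomial, coeff_monomial_mul, one_mul]

lemma coeff_xpow_mul_of_lt (i : Fin 2) (N : ℕ) (f : R2) (m : Fin 2 →₀ ℕ)
    (hm : m i < N) : coeff m (X i ^ N * f) = 0 := by
  rw [X_pow_eq_monomial, coeff_monomial_mul']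
  rw [if_neg]
  rw [Finsupp.single_le_iff]
  exact Nat.not_le.mpr hm

lemma natCast_pow_eq (p N : ℕ) : ((p : R2)) ^ N = C ((p : ℤ) ^ N) := by
  have h : (p : R2) = C ((p : ℤ)) := (map_natCast (C : ℤ →+* R2) p).symm
  rw [h, map_pow]

/-- `p^N ∣ X i^N * f → p^N ∣ f` -/
lemma pdvd (p N : ℕ) (i : Fin 2) (f : R2) (h : ((p : R2)) ^ N ∣ X i ^ N * f) :
    ((p : R2)) ^ N ∣ f := by
  rw [natCast_pow_eq, C_dvd_iff_dvd_coeff] at h ⊢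
  intro m
  have := h (Finsupp.single i N + m)
  rwa [coeff_shift] at this

/-- membership criterion for the ideal `(C c, X 0 ^ N)` -/
lemma mem_span_crit (N : ℕ) (c : ℤ) (g : R2) :
    g ∈ Ideal.span ({C c, X 0 ^ N} : Set R2) ↔
      ∀ m : Fin 2 →₀ ℕ, m 0 < N → c ∣ coeff m g := by
  constructor
  · intro h m hm
    rw [Ideal.mem_span_pair] at h
    obtain ⟨u, v, huv⟩ := h
    have : coeff m g = c * coeff m u := by
      rw [← huv, coeff_add, mul_comm u, coeff_C_mul, mul_comm v,
        coeff_xpow_mul_of_lt 0 N v m hm, add_zero]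
    exact Dvd.intro _ (by rw [this, mul_comm])
  · intro h
    have hsplit := modMonomial_add_divMonomial g (Finsupp.single 0 N)
    have h1 : C c ∣ g.modMonomial (Finsupp.single 0 N) := by
      rw [C_dvd_iff_dvd_coeff]
      intro m
      by_cases hm : Finsupp.single 0 N ≤ m
      · rw [coeff_modMonomial_of_le _ hm]
        exact dvd_zero c
      · rw [coeff_modMonomial_of_not_le _ hm]
        apply h
        rw [Finsupp.single_le_iff] at hm
        exact Nat.not_le.mp hm
    obtain ⟨s, hs⟩ := h1
    rw [Ideal.mem_span_pair]
    refine ⟨s, g.divMonomial (Finsupp.single 0 N), ?_⟩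
    rw [X_pow_eq_monomial]
    calc s * C c + g.divMonomial (Finsupp.single 0 N) * monomial (Finsupp.single 0 N) 1
        = g.modMonomial (Finsupp.single 0 N)
          + monomial (Finsupp.single 0 N) 1 * g.divMonomial (Finsupp.single 0 N) := by
          rw [hs]; ring
      _ = g := hsplit

/-- `ℓ ∣ X 0 * h` and `ℓ ∣ X 1 * h` imply `ℓ ∣ h` -/
lemma step_dvd (ℓ : R2) (hℓ : ℓ ≠ 0) (h : R2) (h0 : ℓ ∣ X 0 * h) (h1 : ℓ ∣ X 1 * h) :
    ℓ ∣ h := by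
  obtain ⟨s, hs⟩ := h0
  obtain ⟨t, ht⟩ := h1
  have key : s * X 1 = t * X 0 := by
    have hmain : ℓ * (s * X 1) = ℓ * (t * X 0) := by
      linear_combination (-(X 1 : R2)) * hs + (X 0 : R2) * ht
    exact mul_left_cancel₀ hℓ hmain
  -- X 0 ∣ s
  have hX0s : X 0 ∣ s := by
    have : X 0 ^ 1 ∣ s := by
      rw [X_pow_eq_monomial, monomial_one_dvd_iff_modMonomial_eq_zero]
      rw [MvPolynomial.eq_zero_iff]
      intro d
      by_cases hd : Finsupp.single 0 1 ≤ d
      · exact coeff_modMonomial_of_le _ hd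
      · rw [coeff_modMonomial_of_not_le _ hd]
        rw [Finsupp.single_le_iff] at hd
        have hd0 : d 0 = 0 := by omega
        have := coeff_shift 1 1 s d
        rw [pow_one] at this
        have h2 : coeff d s = coeff (Finsupp.single 1 1 + d) (s * X 1) := by
          rw [mul_comm]; exact this.symm
        rw [key] at h2
        rw [h2, mul_comm t, ← pow_one (X (0 : Fin 2) : R2)]
        apply coeff_xpow_mul_of_lt 0 1
        simp [hd0, Finsupp.single_apply]
    rwa [pow_one] at this
  obtain ⟨u, hu⟩ := hX0s
  refine ⟨u, ?_⟩
  have : X 0 * h = X 0 * (ℓ * u) := by rw [hs, hu]; ring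
  exact mul_left_cancel₀ (X_ne_zero 0) this

/-- `ℓ ∣ X 0^N g` and `ℓ ∣ X 1^N g` imply `ℓ ∣ g` -/
lemma torsion_dvd (ℓ : R2) (hℓ : ℓ ≠ 0) (N : ℕ) (g : R2)
    (h0 : ℓ ∣ X 0 ^ N * g) (h1 : ℓ ∣ X 1 ^ N * g) : ℓ ∣ g := by
  set P : ℕ → Prop := fun d => ∀ i j : ℕ, i + j = d → ℓ ∣ X 0 ^ i * X 1 ^ j * g with hP
  have hPtop : P (2 * N) := by
    intro i j hij
    rcases le_or_gt N i with hi | hi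
    · obtain ⟨i', rfl⟩ := Nat.exists_eq_add_of_le hi
      exact Dvd.dvd.trans h0 ⟨X 0 ^ i' * X 1 ^ j, by ring⟩
    · have hj : N ≤ j := by omega
      obtain ⟨j', rfl⟩ := Nat.exists_eq_add_of_le hj
      exact Dvd.dvd.trans h1 ⟨X 0 ^ i * X 1 ^ j', by ring⟩
  have hstep : ∀ d, P (d + 1) → P d := by
    intro d hd i j hij
    apply step_dvd ℓ hℓ
    · have := hd (i + 1) j (by omega)
      exact Dvd.dvd.trans this ⟨1, by ring⟩
    · have := hd i (j + 1) (by omega)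
      exact Dvd.dvd.trans this ⟨1, by ring⟩
  have hdown : ∀ t, P (2 * N - t) := by
    intro t
    induction t with
    | zero => simpa using hPtop
    | succ t ih =>
      rcases le_or_gt (2 * N) t with h | h
      · have : 2 * N - (t + 1) = 2 * N - t := by omega
        rwa [this]
      · have : 2 * N - t = (2 * N - (t + 1)) + 1 := by omega
        rw [this] at ih
        exact hstep _ ih
  have := hdown (2 * N) 0 0 (by omega)
  simpa using this


lemma p_pow_ne_zero (p N : ℕ) (hp : p ≠ 0) : ((p : R2)) ^ N ≠ 0 :=
  pow_ne_zero _ (Nat.cast_ne_zero.mpr hp)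

/-- Koszul-type syzygy lemma in `R2` for the sequence `(p^N, X0^N, X1^N)`. -/
lemma koszulR (p N : ℕ) (hp : p ≠ 0) (a b c : R2)
    (h : X 1 ^ N * a - X 0 ^ N * b + ((p : R2)) ^ N * c = 0) :
    ∃ α β γ : R2, a = ((p : R2)) ^ N * β + X 0 ^ N * γ ∧
      b = ((p : R2)) ^ N * α + X 1 ^ N * γ ∧
      c = X 0 ^ N * α - X 1 ^ N * β := by
  have ha : a ∈ Ideal.span ({C ((p : ℤ) ^ N), X 0 ^ N} : Set R2) := by
    rw [mem_span_crit]
    intro m hm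
    have h1 : coeff m a = coeff (Finsupp.single 1 N + m) (X 1 ^ N * a) :=
      (coeff_shift 1 N a m).symm
    have h2 : X 1 ^ N * a = X 0 ^ N * b - ((p : R2)) ^ N * c := by
      linear_combination h
    rw [h2, coeff_sub] at h1
    have h3 : coeff (Finsupp.single 1 N + m) (X 0 ^ N * b) = 0 := by
      apply coeff_xpow_mul_of_lt
      simpa [Finsupp.single_apply] using hm
    rw [h3, natCast_pow_eq, coeff_C_mul, zero_sub] at h1
    rw [h1]
    exact dvd_neg.mpr ⟨_, rfl⟩
  rw [Ideal.mem_span_pair] at ha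
  obtain ⟨u, v, huv⟩ := ha
  -- a = p^N * u + X0^N * v  (after comm)
  have ha' : a = ((p : R2)) ^ N * u + X 0 ^ N * v := by
    rw [← huv, natCast_pow_eq]; ring
  -- key : p^N * (c + X1^N * u) = X0^N * (b - X1^N * v)
  have key : ((p : R2)) ^ N * (c + X 1 ^ N * u) = X 0 ^ N * (b - X 1 ^ N * v) := by
    linear_combination h - X 1 ^ N * ha'
  have hdvd : ((p : R2)) ^ N ∣ X 0 ^ N * (b - X 1 ^ N * v) := ⟨_, key.symm⟩
  obtain ⟨α, hα⟩ := pdvd p N 0 _ hdvd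
  refine ⟨α, u, v, ha', by linear_combination hα, ?_⟩
  -- cancel p^N
  have : ((p : R2)) ^ N * (c + X 1 ^ N * u) = ((p : R2)) ^ N * (X 0 ^ N * α) := by
    rw [key, hα]; ring
  have := mul_left_cancel₀ (p_pow_ne_zero p N hp) this
  linear_combination this

section ModuleLemmas

variable {F : Type} [AddCommGroup F] [Module R2 F] [Module.Free R2 F] [Module.Finite R2 F]

lemma module_koszul (p N : ℕ) (hp : p ≠ 0) (a b c : F)
    (h : (X 1 ^ N : R2) • a - (X 0 ^ N : R2) • b + ((p : R2)) ^ N • c = 0) :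
    ∃ α β γ : F, a = ((p : R2)) ^ N • β + (X 0 ^ N : R2) • γ ∧
      b = ((p : R2)) ^ N • α + (X 1 ^ N : R2) • γ ∧
      c = (X 0 ^ N : R2) • α - (X 1 ^ N : R2) • β := by
  classical
  let bs := Module.Free.chooseBasis R2 F
  have hk : ∀ k, X 1 ^ N * bs.repr a k - X 0 ^ N * bs.repr b k
      + ((p : R2)) ^ N * bs.repr c k = 0 := by
    intro k
    have := congrArg (fun y => bs.repr y k) h
    simpa [map_sub, map_add, Finsupp.smul_apply, smul_eq_mul] using this
  choose A B G hA hB hG using fun k => koszulR p N hp _ _ _ (hk k)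
  refine ⟨∑ k, A k • bs k, ∑ k, B k • bs k, ∑ k, G k • bs k, ?_, ?_, ?_⟩
  · apply bs.repr.injective
    apply Finsupp.ext; intro k
    have hrA := congrFun (bs.repr_sum_self B) k
    have hrG := congrFun (bs.repr_sum_self G) k
    simp only [map_add, map_smul, Finsupp.add_apply, Finsupp.smul_apply, smul_eq_mul]
    rw [show ((bs.repr (∑ k, B k • bs k)) k) = B k from hrA,
      show ((bs.repr (∑ k, G k • bs k)) k) = G k from hrG]
    exact hA k
  · apply bs.repr.injective
    apply Finsupp.ext; intro k
    have hrA := congrFun (bs.repr_sum_self A) k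
    have hrG := congrFun (bs.repr_sum_self G) k
    simp only [map_add, map_smul, Finsupp.add_apply, Finsupp.smul_apply, smul_eq_mul]
    rw [show ((bs.repr (∑ k, A k • bs k)) k) = A k from hrA,
      show ((bs.repr (∑ k, G k • bs k)) k) = G k from hrG]
    exact hB k
  · apply bs.repr.injective
    apply Finsupp.ext; intro k
    have hrA := congrFun (bs.repr_sum_self A) k
    have hrB := congrFun (bs.repr_sum_self B) k
    simp only [map_sub, map_smul, Finsupp.sub_apply, Finsupp.smul_apply, smul_eq_mul]
    rw [show ((bs.repr (∑ k, A k • bs k)) k) = A k from hrA,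
      show ((bs.repr (∑ k, B k • bs k)) k) = B k from hrB]
    exact hG k

lemma module_div (p N : ℕ) (U V : F)
    (h : (X 0 ^ N : R2) • U = ((p : R2)) ^ N • V) : ∃ e : F, U = ((p : R2)) ^ N • e := by
  classical
  let bs := Module.Free.chooseBasis R2 F
  have hk : ∀ k, ((p : R2)) ^ N ∣ bs.repr U k := by
    intro k
    apply pdvd p N 0
    have := congrArg (fun y => bs.repr y k) h
    simp only [map_smul, Finsupp.smul_apply, smul_eq_mul] at this
    exact ⟨bs.repr V k, this⟩
  choose W hW using hk
  refine ⟨∑ k, W k • bs k, ?_⟩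
  apply bs.repr.injective
  apply Finsupp.ext; intro k
  have hrW := congrFun (bs.repr_sum_self W) k
  simp only [map_smul, Finsupp.smul_apply, smul_eq_mul]
  rw [show ((bs.repr (∑ k, W k • bs k)) k) = W k from hrW]
  exact hW k

end ModuleLemmas

/-- an element of `⨁ R2/(ℓ i)` killed by `X0^N` and `X1^N` is zero -/
lemma dsum_eq_zero (ι : Type) [DecidableEq ι] (ℓ : ι → R2) (hℓ : ∀ i, ℓ i ≠ 0) (N : ℕ)
    (g : ⨁ i : ι, (R2 ⧸ Ideal.span {ℓ i}))
    (h0 : (X 0 ^ N : R2) • g = 0) (h1 : (X 1 ^ N : R2) • g = 0) : g = 0 := by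
  apply DFinsupp.ext
  intro i
  obtain ⟨r, hr⟩ := Ideal.Quotient.mk_surjective (I := Ideal.span {ℓ i}) (g i)
  have e0 : (X 0 ^ N : R2) • g i = 0 := by
    have := congrArg (fun y => y i) h0
    exact (DFinsupp.smul_apply _ _ _).symm.trans this
  have e1 : (X 1 ^ N : R2) • g i = 0 := by
    have := congrArg (fun y => y i) h1
    exact (DFinsupp.smul_apply _ _ _).symm.trans this
  have smul_mk : ∀ s : R2, s • (Ideal.Quotient.mk (Ideal.span {ℓ i}) r)
      = Ideal.Quotient.mk (Ideal.span {ℓ i}) (s * r) := by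
    intro s
    rfl
  have mem0 : X 0 ^ N * r ∈ Ideal.span {ℓ i} := by
    rw [← Ideal.Quotient.eq_zero_iff_mem, ← smul_mk, hr]
    exact e0
  have mem1 : X 1 ^ N * r ∈ Ideal.span {ℓ i} := by
    rw [← Ideal.Quotient.eq_zero_iff_mem, ← smul_mk, hr]
    exact e1
  rw [Ideal.mem_span_singleton] at mem0 mem1
  have : ℓ i ∣ r := torsion_dvd (ℓ i) (hℓ i) N r mem0 mem1
  rw [DFinsupp.zero_apply, ← hr, Ideal.Quotient.eq_zero_iff_mem,
    Ideal.mem_span_singleton]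
  exact this


end Stmt13Aux


open Stmt13Aux

/-- Let `R = ℤ[x₁,x₂]` and let `M` be a finitely generated `R`-module
containing a nonzero torsion element `x` of prime order `p`.  Suppose there is an exact
sequence `0 → F₁ → F₂ → E → M → 0` of `R`-modules with `F₁, F₂` free (and finite), and
`E` a direct sum of modules `R/(ℓᵢ)` for nonzero linear forms `ℓᵢ`.  Then the radical of
`Ann(x)` does not contain the augmentation ideal `R⁺ = (x₁,x₂)`: there is `f ∈ R⁺` with
`fⁱ • x ≠ 0` for all `i ≥ 0`. -/
theorem stmt13 {F₁ F₂ E M : Type}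
    [AddCommGroup F₁] [AddCommGroup F₂] [AddCommGroup E] [AddCommGroup M]
    [Module (MvPolynomial (Fin 2) ℤ) F₁] [Module (MvPolynomial (Fin 2) ℤ) F₂]
    [Module (MvPolynomial (Fin 2) ℤ) E] [Module (MvPolynomial (Fin 2) ℤ) M]
    [Module.Free (MvPolynomial (Fin 2) ℤ) F₁] [Module.Finite (MvPolynomial (Fin 2) ℤ) F₁]
    [Module.Free (MvPolynomial (Fin 2) ℤ) F₂] [Module.Finite (MvPolynomial (Fin 2) ℤ) F₂]
    [Module.Finite (MvPolynomial (Fin 2) ℤ) M]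
    (ι : Type) [DecidableEq ι] (ℓ : ι → MvPolynomial (Fin 2) ℤ)
    (hℓ : ∀ i, ℓ i ≠ 0 ∧ (ℓ i).IsHomogeneous 1)
    (eiso : E ≃ₗ[MvPolynomial (Fin 2) ℤ]
      (⨁ i : ι, (MvPolynomial (Fin 2) ℤ ⧸ Ideal.span {ℓ i})))
    (f₁ : F₁ →ₗ[MvPolynomial (Fin 2) ℤ] F₂)
    (f₂ : F₂ →ₗ[MvPolynomial (Fin 2) ℤ] E)
    (f₃ : E →ₗ[MvPolynomial (Fin 2) ℤ] M)
    (h1 : Function.Injective f₁) (h12 : Function.Exact f₁ f₂)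
    (h23 : Function.Exact f₂ f₃) (h3 : Function.Surjective f₃)
    (x : M) (hx : x ≠ 0) (p : ℕ) (hp : p.Prime)
    (hpx : ((p : MvPolynomial (Fin 2) ℤ)) • x = 0) :
    ∃ f ∈ Ideal.span ({X 0, X 1} : Set (MvPolynomial (Fin 2) ℤ)),
      ∀ i : ℕ, f ^ i • x ≠ 0 := by
  by_contra hcon
  push_neg at hcon
  -- get powers of X 0 and X 1 killing x
  have hX0 : (X 0 : MvPolynomial (Fin 2) ℤ) ∈ Ideal.span ({X 0, X 1} : Set _) :=
    Ideal.subset_span (by simp)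
  have hX1 : (X 1 : MvPolynomial (Fin 2) ℤ) ∈ Ideal.span ({X 0, X 1} : Set _) :=
    Ideal.subset_span (by simp)
  obtain ⟨i0, hi0⟩ := hcon _ hX0
  obtain ⟨i1, hi1⟩ := hcon _ hX1
  set N : ℕ := max i0 i1 + 1 with hN
  set r1 : MvPolynomial (Fin 2) ℤ := ((p : MvPolynomial (Fin 2) ℤ)) ^ N with hr1
  set r2 : MvPolynomial (Fin 2) ℤ := X 0 ^ N with hr2
  set r3 : MvPolynomial (Fin 2) ℤ := X 1 ^ N with hr3
  have hr1x : r1 • x = 0 := by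
    have hN1 : N = (N - 1) + 1 := by omega
    rw [hr1, hN1, pow_succ, mul_smul, hpx, smul_zero]
  have hr2x : r2 • x = 0 := by
    have hN1 : N = (N - i0) + i0 := by omega
    rw [hr2, hN1, pow_add, mul_smul, hi0, smul_zero]
  have hr3x : r3 • x = 0 := by
    have hN1 : N = (N - i1) + i1 := by omega
    rw [hr3, hN1, pow_add, mul_smul, hi1, smul_zero]
  -- lift x to e : E
  obtain ⟨e, he⟩ := h3 x
  -- r_i • e are in the image of f₂
  have hker : ∀ r : MvPolynomial (Fin 2) ℤ, r • x = 0 → ∃ w : F₂, f₂ w = r • e := by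
    intro r hr
    have : f₃ (r • e) = 0 := by rw [map_smul, he, hr]
    exact (h23 (r • e)).mp this
  obtain ⟨u, hu⟩ := hker r1 hr1x
  obtain ⟨v, hv⟩ := hker r2 hr2x
  obtain ⟨w, hw⟩ := hker r3 hr3x
  -- relations modulo image of f₁
  have hrel : ∀ (s t : MvPolynomial (Fin 2) ℤ) (y z : F₂),
      f₂ y = s • e → f₂ z = t • e → ∃ a : F₁, f₁ a = t • y - s • z := by
    intro s t y z hy hz
    have : f₂ (t • y - s • z) = 0 := by
      rw [map_sub, map_smul, map_smul, hy, hz, smul_smul, smul_smul, mul_comm]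
      exact sub_self _
    exact ((h12 _).mp this)
  obtain ⟨a, ha⟩ := hrel r1 r2 u v hu hv   -- f₁ a = r2 • u - r1 • v
  obtain ⟨b, hb⟩ := hrel r1 r3 u w hu hw   -- f₁ b = r3 • u - r1 • w
  obtain ⟨c, hc⟩ := hrel r2 r3 v w hv hw   -- f₁ c = r3 • v - r2 • w
  -- Koszul relation in F₁
  have hkos : r3 • a - r2 • b + r1 • c = 0 := by
    apply h1
    rw [map_zero, map_add, map_sub, map_smul, map_smul, map_smul, ha, hb, hc]
    rw [hr1, hr2, hr3]
    module
  obtain ⟨α, β, γ, hA, hB, hG⟩ := module_koszul p N hp.ne_zero a b c (by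
    rw [← hr1, ← hr2, ← hr3]; exact hkos)
  -- corrected lifts
  set U : F₂ := u - f₁ γ with hU
  set V : F₂ := v + f₁ β with hV
  set W : F₂ := w + f₁ α with hW
  have hf₂f₁ : ∀ y : F₁, f₂ (f₁ y) = 0 := fun y => (h12 (f₁ y)).mpr ⟨y, rfl⟩
  have hf₂U : f₂ U = r1 • e := by rw [hU, map_sub, hf₂f₁, hu, sub_zero]
  have hf₂V : f₂ V = r2 • e := by rw [hV, map_add, hf₂f₁, hv, add_zero]
  have hf₂W : f₂ W = r3 • e := by rw [hW, map_add, hf₂f₁, hw, add_zero]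
  have hUV : r2 • U = r1 • V := by
    have h0 : r2 • U - r1 • V = 0 := by
      calc r2 • U - r1 • V
          = (r2 • u - r1 • v) - (r1 • f₁ β + r2 • f₁ γ) := by rw [hU, hV]; module
        _ = f₁ a - f₁ (r1 • β + r2 • γ) := by
            rw [ha, map_add, map_smul, map_smul]
        _ = 0 := by rw [hA, sub_self]
    exact sub_eq_zero.mp h0
  have hUW : r3 • U = r1 • W := by
    have h0 : r3 • U - r1 • W = 0 := by
      calc r3 • U - r1 • W
          = (r3 • u - r1 • w) - (r1 • f₁ α + r3 • f₁ γ) := by rw [hU, hW]; module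
        _ = f₁ b - f₁ (r1 • α + r3 • γ) := by
            rw [hb, map_add, map_smul, map_smul]
        _ = 0 := by rw [hB, sub_self]
    exact sub_eq_zero.mp h0
  -- divide U by r1
  obtain ⟨e'', he''⟩ := module_div p N U V (by rw [← hr1, ← hr2]; exact hUV)
  rw [← hr1] at he''
  have hcancel : Function.Injective (fun z : F₂ => r1 • z) := by
    intro z1 z2 hz
    exact smul_right_injective F₂ (by rw [hr1]; exact p_pow_ne_zero p N hp.ne_zero) hz
  have hVe : V = r2 • e'' := by
    apply hcancel
    show r1 • V = r1 • (r2 • e'')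
    rw [← hUV, he'', smul_smul, smul_smul, mul_comm]
  have hWe : W = r3 • e'' := by
    apply hcancel
    show r1 • W = r1 • (r3 • e'')
    rw [← hUW, he'', smul_smul, smul_smul, mul_comm]
  -- e - f₂ e'' is killed by r1, r2, r3
  have k2 : r2 • (e - f₂ e'') = 0 := by
    rw [smul_sub, ← hf₂V, hVe, map_smul, sub_self]
  have k3 : r3 • (e - f₂ e'') = 0 := by
    rw [smul_sub, ← hf₂W, hWe, map_smul, sub_self]
  -- transfer to the direct sum and conclude e = f₂ e''
  have hg : eiso (e - f₂ e'') = 0 := by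
    apply dsum_eq_zero ι ℓ (fun i => (hℓ i).1) N
    · rw [← map_smul, ← hr2] at *
      rw [show (X 0 ^ N : MvPolynomial (Fin 2) ℤ) • (e - f₂ e'') = r2 • (e - f₂ e'') from by
        rw [hr2], k2, map_zero]
    · rw [show (X 1 ^ N : MvPolynomial (Fin 2) ℤ) • eiso (e - f₂ e'')
        = eiso (r3 • (e - f₂ e'')) from by rw [map_smul, hr3], k3, map_zero]
  have he0 : e - f₂ e'' = 0 := by
    have := eiso.map_eq_zero_iff.mp hg
    exact this
  have hef : e = f₂ e'' := by
    have := sub_eq_zero.mp he0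
    exact this
  apply hx
  rw [← he, hef]
  exact (h23 (f₂ e'')).mpr ⟨e'', rfl⟩
end
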